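/- arXiv:2406.11803 — 3 statements merged into one kernel-verified Lean document; each statement's English description precedes it below -/
import Mathlib

section
/- Let $f : \{0,1\}^m \to \mathbb{R}_{\geq 0}$ be a nonnegative function such that $k \mapsto \mathbb{E}_{\mathbf{v} \sim U(B(k))}[f(\mathbf{v})]$ is monotonically increasing (or monotonically decreasing) in $k$. Then for any integer $k$ with $0 \leq k \leq m$, $\mathbb{E}_{\mathbf{v} \sim U(B(k))}[f(\mathbf{v})] \leq 2\,\mathbb{E}_{\mathbf{v} \sim I(k/m)}[f(\mathbf{v})]$. -/
open Finset

/-- Number of ones in a binary vector. -/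
def ones {m : ℕ} (v : Fin m → Bool) : ℕ :=
  (Finset.univ.filter (fun i => v i = true)).card

/-- `B(k)`: the set of binary vectors in `{0,1}^m` with exactly `k` ones. -/
def Bset (m k : ℕ) : Finset (Fin m → Bool) :=
  Finset.univ.filter (fun v => ones v = k)

/-- Product Bernoulli(p) weight of a binary vector. -/
noncomputable def bw {α : Type*} [Fintype α] (p : ℝ) (v : α → Bool) : ℝ :=
  ∏ i, (if v i then p else 1 - p)

/-- Expectation of `f` under the uniform distribution `U(B(k))`. -/
noncomputable def uE (m k : ℕ) (f : (Fin m → Bool) → ℝ) : ℝ :=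
  (∑ v ∈ Bset m k, f v) / (Bset m k).card

lemma ones_le {m : ℕ} (v : Fin m → Bool) : ones v ≤ m := by
  rw [ones]
  calc (Finset.univ.filter (fun i => v i = true)).card ≤ (Finset.univ : Finset (Fin m)).card :=
        Finset.card_filter_le _ _
    _ = m := by rw [Finset.card_univ, Fintype.card_fin]

lemma card_Bset (m j : ℕ) : (Bset m j).card = m.choose j := by
  have h : (Bset m j).card = (Finset.powersetCard j (univ : Finset (Fin m))).card := by
    apply Finset.card_bij' (fun v _ => Finset.univ.filter (fun i => v i = true))
      (fun s _ => (fun i => decide (i ∈ s)))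
    · intro v hv
      funext i
      simp
    · intro s hs
      ext i
      simp
    · intro v hv
      rw [Finset.mem_powersetCard]
      have hv' : ones v = j := by simpa [Bset] using hv
      exact ⟨Finset.subset_univ _, hv'⟩
    · intro s hs
      rw [Finset.mem_powersetCard] at hs
      have : ones (fun i => decide (i ∈ s)) = j := by
        rw [ones]
        have he : Finset.univ.filter (fun i => decide (i ∈ s) = true) = s := by
          ext i; simp
        rw [he]
        exact hs.2
      simpa [Bset] using this
  rw [h, Finset.card_powersetCard, Finset.card_univ, Fintype.card_fin]

lemma bw_eq {m : ℕ} (p : ℝ) (v : Fin m → Bool) :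
    bw p v = p ^ (ones v) * (1-p) ^ (m - ones v) := by
  rw [bw, ← Finset.prod_filter_mul_prod_filter_not Finset.univ (fun i => v i = true)]
  congr 1
  · rw [Finset.prod_congr rfl (fun i hi => if_pos ((Finset.mem_filter.mp hi).2)),
      Finset.prod_const, ones]
  · rw [Finset.prod_congr rfl (fun i hi => if_neg ((Finset.mem_filter.mp hi).2)),
      Finset.prod_const]
    congr 1
    have h := Finset.card_filter_add_card_filter_not
      (s := (Finset.univ : Finset (Fin m))) (p := fun i => v i = true)
    rw [Finset.card_univ, Fintype.card_fin] at h
    rw [ones]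
    omega

namespace MedAux

noncomputable def b (p : ℝ) (n j : ℕ) : ℝ := (n.choose j : ℝ) * p ^ j * (1 - p) ^ (n - j)

noncomputable def L (p : ℝ) (n t : ℕ) : ℝ := ∑ j ∈ range t, b p n j

lemma b_nonneg {p : ℝ} (hp0 : 0 ≤ p) (hp1 : p ≤ 1) (n j : ℕ) : 0 ≤ b p n j := by
  have h : (0:ℝ) ≤ 1 - p := by linarith
  exact mul_nonneg (mul_nonneg (Nat.cast_nonneg _) (pow_nonneg hp0 _)) (pow_nonneg h _)

lemma b_pascal (p : ℝ) (n j : ℕ) :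
    b p (n+1) (j+1) = p * b p n j + (1 - p) * b p n (j+1) := by
  rcases le_or_gt (j+1) n with h | h
  · unfold b
    rw [Nat.choose_succ_succ]
    push_cast
    simp only [Nat.succ_eq_add_one]
    have h2 : n - j = (n - (j+1)) + 1 := by omega
    rw [h2]
    ring
  · rcases Nat.eq_or_lt_of_le h with h' | h'
    · have hn : n = j := by omega
      subst hn
      unfold b
      simp [Nat.choose_succ_succ, Nat.choose_eq_zero_of_lt (Nat.lt_succ_self n)]
      ring
    · unfold b
      rw [Nat.choose_eq_zero_of_lt (by omega), Nat.choose_eq_zero_of_lt (by omega),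
        Nat.choose_eq_zero_of_lt (by omega)]
      simp

lemma L_rec (p : ℝ) (n M : ℕ) :
    L p (n+1) (M+1) = L p n M + (1-p) * b p n M := by
  unfold L
  rw [Finset.sum_range_succ']
  have h0 : b p (n+1) 0 = (1-p) * b p n 0 := by
    unfold b; simp [pow_succ]; ring
  have hterm : ∀ i ∈ range M, b p (n+1) (i+1) = p * b p n i + (1-p) * b p n (i+1) :=
    fun i _ => b_pascal p n i
  rw [Finset.sum_congr rfl hterm, Finset.sum_add_distrib, ← Finset.mul_sum, ← Finset.mul_sum, h0]
  have hs : ∑ i ∈ range M, b p n (i+1) = (∑ i ∈ range M, b p n i) + b p n M - b p n 0 := by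
    rw [← Finset.sum_range_succ, Finset.sum_range_succ']
    ring
  rw [hs]
  ring

lemma sum_b_eq_one (p : ℝ) (M : ℕ) : ∑ j ∈ range (M+1), b p M j = 1 := by
  have h : ∑ j ∈ range (M+1), b p M j = (p + (1-p)) ^ M := by
    rw [add_pow]
    exact Finset.sum_congr rfl (fun j _ => by unfold b; ring)
  rw [h]
  norm_num

lemma ID (p : ℝ) (n : ℕ) : ∀ M : ℕ, ∑ s ∈ range M, (1-p) * b p (n+s) s = L p (n+M) M := by
  intro M
  induction M with
  | zero => simp [L]
  | succ M ih =>
      rw [Finset.sum_range_succ, ih, ← Nat.add_assoc, L_rec]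

lemma chooseIneq (d : ℕ) : ∀ (j u : ℕ),
    (u+d).choose u * (u+j+1+d)^(2*j+1) ≤ (u+2*j+1+d).choose (u+2*j+1) * (u+j+1)^(2*j+1) := by
  intro j
  induction j with
  | zero =>
      intro u
      have h := Nat.add_one_mul_choose_eq (u+d) u
      -- h : (u+d+1) * (u+d).choose u = (u+d+1).choose (u+1) * (u+1)
      have e1 : u+0+1+d = u+d+1 := by omega
      have e2 : u+2*0+1+d = u+d+1 := by omega
      have e3 : u+2*0+1 = u+1 := by omega
      have e4 : u+0+1 = u+1 := by omega
      apply le_of_eq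
      calc (u+d).choose u * (u+0+1+d)^(2*0+1)
          = (u+d+1) * (u+d).choose u := by rw [e1]; ring
        _ = (u+d+1).choose (u+1) * (u+1) := h
        _ = (u+2*0+1+d).choose (u+2*0+1) * (u+0+1)^(2*0+1) := by rw [e2, e3, e4]; ring
  | succ j ih =>
      intro u
      -- canonical names
      have IH : (u+d+1).choose (u+1) * (u+d+j+2)^(2*j+1) ≤
          (u+d+2*j+2).choose (u+2*j+2) * (u+j+2)^(2*j+1) := by
        have h := ih (u+1)
        have e2 : u+1+j+1+d = u+d+j+2 := by omega
        have e3 : u+1+2*j+1+d = u+d+2*j+2 := by omega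
        have e1 : u+1+d = u+d+1 := by omega
        have e4 : u+1+2*j+1 = u+2*j+2 := by omega
        have e5 : u+1+j+1 = u+j+2 := by omega
        rw [e2, e3, e1, e4, e5] at h
        exact h
      have id1 : (u+d+1) * (u+d).choose u = (u+d+1).choose (u+1) * (u+1) := by
        have h := Nat.add_one_mul_choose_eq (u+d) u
        simpa only [Nat.succ_eq_add_one] using h
      have id2 : (u+d+2*j+3) * (u+d+2*j+2).choose (u+2*j+2) =
          (u+d+2*j+3).choose (u+2*j+3) * (u+2*j+3) := by
        have h := Nat.add_one_mul_choose_eq (u+d+2*j+2) (u+2*j+2)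
        have e1 : u+d+2*j+2+1 = u+d+2*j+3 := by omega
        have e2 : u+2*j+2+1 = u+2*j+3 := by omega
        rw [e1, e2] at h
        exact h
      have key : (u+1)*(u+2*j+3) * (u+d+j+2)^2 ≤ (u+d+1)*(u+d+2*j+3) * (u+j+2)^2 := by
        have hid : (u+d+1)*(u+d+2*j+3) * (u+j+2)^2 =
            (u+1)*(u+2*j+3) * (u+d+j+2)^2 + (j+1)^2*(d*(2*u+2*j+4+d)) := by ring
        rw [hid]
        exact Nat.le_add_right _ _
      have step : ((u+1)*(u+2*j+3) * (u+d+j+2)^2) * ((u+d+1).choose (u+1) * (u+d+j+2)^(2*j+1)) ≤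
          ((u+d+1)*(u+d+2*j+3) * (u+j+2)^2) * ((u+d+2*j+2).choose (u+2*j+2) * (u+j+2)^(2*j+1)) :=
        Nat.mul_le_mul key IH
      have main : (u+d).choose u * (u+d+j+2)^(2*j+3) ≤
          (u+d+2*j+3).choose (u+2*j+3) * (u+j+2)^(2*j+3) := by
        refine Nat.le_of_mul_le_mul_left (c := (u+d+1)*(u+2*j+3)) ?_ (by positivity)
        calc (u+d+1)*(u+2*j+3) * ((u+d).choose u * (u+d+j+2)^(2*j+3))
            = (u+2*j+3) * ((u+d+1) * (u+d).choose u) * (u+d+j+2)^(2*j+3) := by ring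
          _ = (u+2*j+3) * ((u+d+1).choose (u+1) * (u+1)) * (u+d+j+2)^(2*j+3) := by rw [id1]
          _ = ((u+1)*(u+2*j+3) * (u+d+j+2)^2) * ((u+d+1).choose (u+1) * (u+d+j+2)^(2*j+1)) := by
              rw [show 2*j+3 = 2*j+1+2 by omega, pow_add]
              ring
          _ ≤ ((u+d+1)*(u+d+2*j+3) * (u+j+2)^2) *
                ((u+d+2*j+2).choose (u+2*j+2) * (u+j+2)^(2*j+1)) := step
          _ = (u+d+1) * ((u+d+2*j+3) * (u+d+2*j+2).choose (u+2*j+2)) *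
                ((u+j+2)^2 * (u+j+2)^(2*j+1)) := by ring
          _ = (u+d+1) * ((u+d+2*j+3).choose (u+2*j+3) * (u+2*j+3)) *
                ((u+j+2)^2 * (u+j+2)^(2*j+1)) := by rw [id2]
          _ = (u+d+1)*(u+2*j+3) * ((u+d+2*j+3).choose (u+2*j+3) * (u+j+2)^(2*j+3)) := by
              rw [show 2*j+3 = 2*j+1+2 by omega, pow_add]
              ring
      have g1 : u+(j+1)+1+d = u+d+j+2 := by omega
      have g2 : 2*(j+1)+1 = 2*j+3 := by omega
      have g3 : u+2*(j+1)+1+d = u+d+2*j+3 := by omega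
      have g4 : u+2*(j+1)+1 = u+2*j+3 := by omega
      have g5 : u+(j+1)+1 = u+j+2 := by omega
      rw [g2, g3, g4, g1, g5]
      exact main

end MedAux

namespace MedAux2
open MedAux

lemma pair_le {p : ℝ} (hp0 : 0 ≤ p) (hp1 : p ≤ 1) (n a j : ℕ)
    (ht : ((a+j+1 : ℕ) : ℝ) ≤ ((a+j+1+n : ℕ) : ℝ) * p) :
    (1-p) * b p (a+n) a ≤ (1-p) * b p (a+2*j+1+n) (a+2*j+1) := by
  have hq : (0:ℝ) ≤ 1 - p := by linarith
  have hC := chooseIneq n j a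
  -- cast to ℝ
  have hCr : ((a+n).choose a : ℝ) * ((a+j+1+n : ℕ) : ℝ)^(2*j+1) ≤
      ((a+2*j+1+n).choose (a+2*j+1) : ℝ) * ((a+j+1 : ℕ) : ℝ)^(2*j+1) := by
    exact_mod_cast Nat.mul_le_mul hC (le_refl 1) |>.trans_eq (by ring) |>.trans_eq' (by ring)
  have hT : (0:ℝ) ≤ ((a+j+1 : ℕ) : ℝ) := Nat.cast_nonneg _
  have hNN : (0:ℝ) < ((a+j+1+n : ℕ) : ℝ) := by positivity
  have h2 : ((a+j+1 : ℕ) : ℝ)^(2*j+1) ≤ (((a+j+1+n : ℕ) : ℝ) * p)^(2*j+1) :=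
    pow_le_pow_left₀ hT ht _
  have h3 : ((a+n).choose a : ℝ) * ((a+j+1+n : ℕ) : ℝ)^(2*j+1) ≤
      ((a+2*j+1+n).choose (a+2*j+1) : ℝ) * (((a+j+1+n : ℕ) : ℝ))^(2*j+1) * p^(2*j+1) := by
    calc ((a+n).choose a : ℝ) * ((a+j+1+n : ℕ) : ℝ)^(2*j+1)
        ≤ ((a+2*j+1+n).choose (a+2*j+1) : ℝ) * ((a+j+1 : ℕ) : ℝ)^(2*j+1) := hCr
      _ ≤ ((a+2*j+1+n).choose (a+2*j+1) : ℝ) * (((a+j+1+n : ℕ) : ℝ) * p)^(2*j+1) := by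
          exact mul_le_mul_of_nonneg_left h2 (Nat.cast_nonneg _)
      _ = ((a+2*j+1+n).choose (a+2*j+1) : ℝ) * (((a+j+1+n : ℕ) : ℝ))^(2*j+1) * p^(2*j+1) := by
          rw [mul_pow]; ring
  have h4 : ((a+n).choose a : ℝ) ≤ ((a+2*j+1+n).choose (a+2*j+1) : ℝ) * p^(2*j+1) := by
    have hpow : (0:ℝ) < ((a+j+1+n : ℕ) : ℝ)^(2*j+1) := pow_pos hNN _
    refine le_of_mul_le_mul_right ?_ hpow
    calc ((a+n).choose a : ℝ) * ((a+j+1+n : ℕ) : ℝ)^(2*j+1) ≤ _ := h3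
      _ = ((a+2*j+1+n).choose (a+2*j+1) : ℝ) * p^(2*j+1) * ((a+j+1+n : ℕ) : ℝ)^(2*j+1) := by
          ring
  -- now unfold b
  unfold b
  have e1 : a + n - a = n := by omega
  have e2 : a+2*j+1+n - (a+2*j+1) = n := by omega
  rw [e1, e2]
  have expand : ((a+2*j+1+n).choose (a+2*j+1) : ℝ) * p^(a+2*j+1) =
      (((a+2*j+1+n).choose (a+2*j+1) : ℝ) * p^(2*j+1)) * p^a := by
    rw [show a+2*j+1 = 2*j+1+a by omega, pow_add]; ring
  calc (1-p) * (((a+n).choose a : ℝ) * p^a * (1-p)^n)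
      ≤ (1-p) * ((((a+2*j+1+n).choose (a+2*j+1) : ℝ) * p^(2*j+1)) * p^a * (1-p)^n) := by
        apply mul_le_mul_of_nonneg_left _ hq
        apply mul_le_mul_of_nonneg_right _ (pow_nonneg hq _)
        exact mul_le_mul_of_nonneg_right h4 (pow_nonneg hp0 _)
    _ = (1-p) * (((a+2*j+1+n).choose (a+2*j+1) : ℝ) * p^(a+2*j+1) * (1-p)^n) := by
        rw [expand]

lemma median_low {p : ℝ} (hp0 : 0 ≤ p) (hp1 : p ≤ 1) (N t : ℕ) (ht : (t:ℝ) ≤ (N:ℝ) * p) :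
    L p N t ≤ 1/2 := by
  have htN : t ≤ N := by
    have : (t:ℝ) ≤ (N:ℝ) := le_trans ht (by nlinarith [Nat.cast_nonneg (α := ℝ) N])
    exact_mod_cast this
  set n := N - t with hn
  have hN : n + t = N := by omega
  set u : ℕ → ℝ := fun s => (1-p) * b p (n+s) s with hu
  have pairing : ∀ j ∈ range t, u (t-1-j) ≤ u (t+j) := by
    intro j hj
    rw [Finset.mem_range] at hj
    have ha : t-1-j = t-1-j := rfl
    set a := t-1-j with hadef
    have hta : t = a+j+1 := by omega
    have e1 : n + a = a + n := by omega
    have e2 : n + (t+j) = a+2*j+1+n := by omega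
    have e3 : t+j = a+2*j+1 := by omega
    rw [hu]
    simp only
    rw [e1, e2, e3]
    apply pair_le hp0 hp1
    have eT : ((a+j+1 : ℕ) : ℝ) = (t : ℝ) := by exact_mod_cast congrArg Nat.cast hta.symm
    have eN : ((a+j+1+n : ℕ) : ℝ) = (N : ℝ) := by
      have : a+j+1+n = N := by omega
      exact_mod_cast congrArg Nat.cast this
    rw [eT, eN]
    exact ht
  have hL : L p N t = ∑ s ∈ range t, u s := by
    rw [← hN, ← ID p n t]
  have hrefl : ∑ s ∈ range t, u s = ∑ j ∈ range t, u (t-1-j) :=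
    (Finset.sum_range_reflect u t).symm
  have hpairsum : ∑ j ∈ range t, u (t-1-j) ≤ ∑ j ∈ range t, u (t+j) :=
    Finset.sum_le_sum pairing
  have hsplit : ∑ s ∈ range (t+t), u s = ∑ s ∈ range t, u s + ∑ j ∈ range t, u (t+j) :=
    Finset.sum_range_add u t t
  have hid2 : ∑ s ∈ range (t+t), u s = L p (n+(t+t)) (t+t) := ID p n (t+t)
  have hlast : L p (n+(t+t)) (t+t) ≤ 1 := by
    have hsub : L p (n+(t+t)) (t+t) ≤ ∑ j ∈ range (n+(t+t)+1), b p (n+(t+t)) j := by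
      apply Finset.sum_le_sum_of_subset_of_nonneg
      · exact Finset.range_subset_range.2 (by omega)
      · intro i _ _
        exact b_nonneg hp0 hp1 _ _
    rw [sum_b_eq_one p (n+(t+t))] at hsub
    exact hsub
  have : L p N t + L p N t ≤ 1 := by
    calc L p N t + L p N t = ∑ s ∈ range t, u s + ∑ j ∈ range t, u (t-1-j) := by
          rw [hL, hrefl]
      _ ≤ ∑ s ∈ range t, u s + ∑ j ∈ range t, u (t+j) := by linarith [hpairsum]
      _ = L p (n+(t+t)) (t+t) := by rw [← hsplit, hid2]
      _ ≤ 1 := hlast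
  linarith

lemma b_reflect {p : ℝ} (N s : ℕ) (hs : s ≤ N) : b p N (N-s) = b (1-p) N s := by
  unfold b
  rw [Nat.choose_symm hs]
  have e1 : N - (N-s) = s := by omega
  rw [e1, sub_sub_cancel]
  ring

lemma median_high {p : ℝ} (hp0 : 0 ≤ p) (hp1 : p ≤ 1) (N t : ℕ) (htN : t ≤ N)
    (ht : (N:ℝ) * p ≤ t) : 1/2 ≤ L p N (t+1) := by
  have hlow := median_low (p := 1-p) (by linarith) (by linarith) N (N-t) ?_
  · have htot := sum_b_eq_one p N
    rw [show N+1 = (t+1)+(N-t) by omega] at htot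
    rw [Finset.sum_range_add] at htot
    have hsecond : ∑ s ∈ range (N-t), b p N (t+1+s) = L (1-p) N (N-t) := by
      rw [← Finset.sum_range_reflect (fun s => b p N (t+1+s)) (N-t)]
      unfold L
      apply Finset.sum_congr rfl
      intro j hj
      rw [Finset.mem_range] at hj
      have e : t+1+(N-t-1-j) = N - j := by omega
      rw [e, b_reflect N j (by omega)]
    rw [hsecond] at htot
    have : L p N (t+1) = 1 - L (1-p) N (N-t) := by
      unfold L at htot ⊢
      linarith
    rw [this]
    linarith
  · have hc : ((N - t : ℕ) : ℝ) = (N:ℝ) - (t:ℝ) := by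
      push_cast [htN]
      ring
    rw [hc]
    nlinarith [ht]

end MedAux2


/-- If `f` is nonnegative and `k ↦ E_{U(B(k))}[f]` is monotonically increasing or
decreasing in `k`, then `E_{U(B(k))}[f] ≤ 2 E_{I(k/m)}[f]`. -/
theorem stmt1 (m : ℕ) (hm : 1 ≤ m) (f : (Fin m → Bool) → ℝ) (hf : ∀ v, 0 ≤ f v)
    (hmono :
      (∀ k k' : ℕ, k ≤ k' → k' ≤ m → uE m k f ≤ uE m k' f) ∨
      (∀ k k' : ℕ, k ≤ k' → k' ≤ m → uE m k' f ≤ uE m k f))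
    (k : ℕ) (hk : k ≤ m) :
    uE m k f ≤ 2 * ∑ v : Fin m → Bool, bw ((k : ℝ) / m) v * f v := by
  set p : ℝ := (k : ℝ) / m with hp
  have hm0 : (0:ℝ) < m := by exact_mod_cast hm
  have hp0 : 0 ≤ p := by positivity
  have hp1 : p ≤ 1 := by
    rw [hp, div_le_one hm0]
    exact_mod_cast hk
  have hmp : (m:ℝ) * p = k := by
    rw [hp]; field_simp
  -- fiberwise decomposition
  have hfib : ∑ j ∈ range (m+1), ∑ v ∈ Finset.univ.filter (fun v => ones v = j),
      bw p v * f v = ∑ v : Fin m → Bool, bw p v * f v :=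
    Finset.sum_fiberwise_of_maps_to
      (fun v _ => Finset.mem_range.mpr (Nat.lt_succ_of_le (ones_le v))) _
  have hEj : ∀ j ∈ range (m+1), ∑ v ∈ Finset.univ.filter (fun v => ones v = j),
      bw p v * f v = MedAux.b p m j * uE m j f := by
    intro j hj
    have hj' : j ≤ m := by rw [Finset.mem_range] at hj; omega
    have hcongr : ∀ v ∈ Finset.univ.filter (fun v => ones v = j),
        bw p v * f v = (p^j * (1-p)^(m-j)) * f v := by
      intro v hv
      have hov : ones v = j := (Finset.mem_filter.mp hv).2
      rw [bw_eq, hov]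
    rw [Finset.sum_congr rfl hcongr, ← Finset.mul_sum]
    have hBf : (Bset m j : Finset (Fin m → Bool)) = Finset.univ.filter (fun v => ones v = j) := rfl
    rw [MedAux.b]
    simp only [uE]
    rw [card_Bset, ← hBf]
    have hC : ((m.choose j : ℕ) : ℝ) ≠ 0 := by
      exact_mod_cast (Nat.choose_pos hj').ne'
    field_simp
  have hE : ∑ v : Fin m → Bool, bw p v * f v
      = ∑ j ∈ range (m+1), MedAux.b p m j * uE m j f := by
    rw [← hfib]
    exact Finset.sum_congr rfl hEj
  have huE : ∀ j, 0 ≤ uE m j f := fun j =>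
    div_nonneg (Finset.sum_nonneg fun v _ => hf v) (Nat.cast_nonneg _)
  have hbnn : ∀ j, 0 ≤ MedAux.b p m j := fun j => MedAux.b_nonneg hp0 hp1 m j
  rw [hE]
  rcases hmono with hinc | hdec
  · -- increasing case
    have htail : 1/2 ≤ ∑ j ∈ (range (m+1)).filter (fun j => k ≤ j), MedAux.b p m j := by
      have hsplit := Finset.sum_filter_add_sum_filter_not (range (m+1)) (fun j => k ≤ j)
        (MedAux.b p m)
      have hnot : (range (m+1)).filter (fun j => ¬ k ≤ j) = range k := by
        ext a
        simp only [Finset.mem_filter, Finset.mem_range]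
        omega
      rw [hnot] at hsplit
      have hLk : MedAux.L p m k ≤ 1/2 :=
        MedAux2.median_low hp0 hp1 m k (by rw [hmp])
      have htot := MedAux.sum_b_eq_one p m
      have hLdef : MedAux.L p m k = ∑ j ∈ range k, MedAux.b p m j := rfl
      linarith [hsplit, htot, hLk, hLdef ▸ hLk]
    have step1 : (1/2) * uE m k f ≤
        ∑ j ∈ (range (m+1)).filter (fun j => k ≤ j), MedAux.b p m j * uE m j f := by
      calc (1/2) * uE m k f
          ≤ (∑ j ∈ (range (m+1)).filter (fun j => k ≤ j), MedAux.b p m j) * uE m k f :=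
            mul_le_mul_of_nonneg_right htail (huE k)
        _ = ∑ j ∈ (range (m+1)).filter (fun j => k ≤ j), MedAux.b p m j * uE m k f := by
            rw [Finset.sum_mul]
        _ ≤ ∑ j ∈ (range (m+1)).filter (fun j => k ≤ j), MedAux.b p m j * uE m j f := by
            apply Finset.sum_le_sum
            intro j hj
            rw [Finset.mem_filter, Finset.mem_range] at hj
            exact mul_le_mul_of_nonneg_left (hinc k j hj.2 (by omega)) (hbnn j)
    have step2 : ∑ j ∈ (range (m+1)).filter (fun j => k ≤ j), MedAux.b p m j * uE m j f ≤
        ∑ j ∈ range (m+1), MedAux.b p m j * uE m j f :=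
      Finset.sum_le_sum_of_subset_of_nonneg (Finset.filter_subset _ _)
        (fun j _ _ => mul_nonneg (hbnn j) (huE j))
    linarith
  · -- decreasing case
    have htail : 1/2 ≤ MedAux.L p m (k+1) :=
      MedAux2.median_high hp0 hp1 m k hk (by rw [hmp])
    have step1 : (1/2) * uE m k f ≤ ∑ j ∈ range (k+1), MedAux.b p m j * uE m j f := by
      calc (1/2) * uE m k f
          ≤ (MedAux.L p m (k+1)) * uE m k f := mul_le_mul_of_nonneg_right htail (huE k)
        _ = ∑ j ∈ range (k+1), MedAux.b p m j * uE m k f := by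
            rw [MedAux.L, Finset.sum_mul]
        _ ≤ ∑ j ∈ range (k+1), MedAux.b p m j * uE m j f := by
            apply Finset.sum_le_sum
            intro j hj
            rw [Finset.mem_range] at hj
            exact mul_le_mul_of_nonneg_left (hdec j k (by omega) hk) (hbnn j)
    have step2 : ∑ j ∈ range (k+1), MedAux.b p m j * uE m j f ≤
        ∑ j ∈ range (m+1), MedAux.b p m j * uE m j f :=
      Finset.sum_le_sum_of_subset_of_nonneg (Finset.range_subset_range.2 (by omega))
        (fun j _ _ => mul_nonneg (hbnn j) (huE j))
    linarith
end

section
/- Let $\mathcal{Y}$ be a set and $g : \mathcal{Y}^m \to \mathbb{R}$ satisfy the bounded differences condition: for each $i$, changing the $i$-th argument changes $g$ by at most $c_i$. Let $x_1,\dots,x_m$ be independent $\mathcal{Y}$-valued random variables and $C = \sum_{i=1}^m c_i^2$. Then for all $t \geq 0$, $\Pr(\mathbb{E}[g(x_1,\dots,x_m)] > g(x_1,\dots,x_m) + t) \leq e^{-2t^2/C}$. -/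
open MeasureTheory ProbabilityTheory Real



lemma mcd_phi_pos {p : ℝ} (hp0 : 0 ≤ p) (hp1 : p ≤ 1) (u : ℝ) :
    0 < 1 - p + p * exp u := by
  rcases eq_or_lt_of_le hp1 with h | h
  · simp [← h]; positivity
  · have : 0 < 1 - p := by linarith
    nlinarith [exp_pos u, hp0.lt_or_eq]

lemma mcd_analytic {p : ℝ} (hp0 : 0 ≤ p) (hp1 : p ≤ 1) (u : ℝ) :
    (1 - p) * exp (-(p * u)) + p * exp ((1 - p) * u) ≤ exp (u ^ 2 / 8) := by
  set φ : ℝ → ℝ := fun u => 1 - p + p * exp u with hφdef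
  have φpos : ∀ u, 0 < φ u := fun u => mcd_phi_pos hp0 hp1 u
  set L : ℝ → ℝ := fun u => -(p * u) + log (φ u) with hLdef
  set L' : ℝ → ℝ := fun u => -p + p * exp u / φ u with hL'def
  set q : ℝ → ℝ := fun u => p * exp u / φ u with hqdef
  have hφ : ∀ u, HasDerivAt φ (p * exp u) u := by
    intro u
    exact ((Real.hasDerivAt_exp u).const_mul p).const_add (1 - p)
  have hL : ∀ u, HasDerivAt L (L' u) u := by
    intro u
    have h1 : HasDerivAt (fun u : ℝ => -(p * u)) (-p) u := by
      have h := ((hasDerivAt_id u).const_mul p).neg; rw [mul_one] at h; exact h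
    exact h1.add ((hφ u).log (φpos u).ne')
  have hq : ∀ u, HasDerivAt q (q u - (q u) ^ 2) u := by
    intro u
    have h1 : HasDerivAt (fun u : ℝ => p * exp u) (p * exp u) u :=
      (Real.hasDerivAt_exp u).const_mul p
    have h2 := h1.div (hφ u) (φpos u).ne'
    have heq : (p * exp u * φ u - p * exp u * (p * exp u)) / φ u ^ 2 = q u - q u ^ 2 := by
      have hwpos : 0 < φ u := φpos u
      rw [hqdef]
      simp only
      generalize φ u = w at hwpos ⊢
      field_simp
    exact heq ▸ h2
  have hL' : ∀ u, HasDerivAt L' (q u - (q u) ^ 2) u := by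
    intro u
    exact ((hq u).const_add (-p))
  -- G = derivative of F, F = u^2/8 - L u
  set G : ℝ → ℝ := fun u => u / 4 - L' u with hGdef
  set F : ℝ → ℝ := fun u => u ^ 2 / 8 - L u with hFdef
  have hF : ∀ u, HasDerivAt F (G u) u := by
    intro u
    have h1 : HasDerivAt (fun u : ℝ => u ^ 2 / 8) (u / 4) u := by
      have := (hasDerivAt_pow 2 u).div_const 8
      exact this.congr_deriv (by rw [show (2:ℕ) - 1 = 1 from rfl, pow_one]; push_cast; ring)
    exact h1.sub (hL u)
  have hG : ∀ u, HasDerivAt G (1 / 4 - (q u - (q u) ^ 2)) u := by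
    intro u
    have h1 : HasDerivAt (fun u : ℝ => u / 4) (1 / 4) u := by
      simpa using (hasDerivAt_id u).div_const 4
    exact h1.sub (hL' u)
  have hGmono : Monotone G := by
    have hdiff : Differentiable ℝ G := fun u => (hG u).differentiableAt
    refine monotone_of_deriv_nonneg hdiff ?_
    intro u
    rw [(hG u).deriv]
    nlinarith [sq_nonneg (q u - 1 / 2)]
  have hG0 : G 0 = 0 := by
    simp [hGdef, hL'def, hφdef]
  have hF0 : F 0 = 0 := by
    simp [hFdef, hLdef, hφdef]
  have key : ∀ u, 0 ≤ F u := by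
    intro u
    rcases le_total 0 u with hu | hu
    · have : MonotoneOn F (Set.Ici (0:ℝ)) := by
        refine monotoneOn_of_deriv_nonneg (convex_Ici 0)
          (fun u _ => (hF u).continuousAt.continuousWithinAt)
          (fun u _ => (hF u).differentiableAt.differentiableWithinAt) ?_
        intro v hv
        rw [(hF v).deriv]
        have : (0:ℝ) ≤ v := le_of_lt (by simpa using hv)
        calc (0:ℝ) = G 0 := hG0.symm
          _ ≤ G v := hGmono this
      have := this (Set.self_mem_Ici) (Set.mem_Ici.2 hu) hu
      linarith [hF0 ▸ this]
    · have : AntitoneOn F (Set.Iic (0:ℝ)) := by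
        refine antitoneOn_of_deriv_nonpos (convex_Iic 0)
          (fun u _ => (hF u).continuousAt.continuousWithinAt)
          (fun u _ => (hF u).differentiableAt.differentiableWithinAt) ?_
        intro v hv
        rw [(hF v).deriv]
        have : v ≤ (0:ℝ) := le_of_lt (by simpa using hv)
        calc G v ≤ G 0 := hGmono this
          _ = 0 := hG0
      have := this (Set.mem_Iic.2 hu) (Set.self_mem_Iic) hu
      linarith [hF0 ▸ this]
  have hLle : L u ≤ u ^ 2 / 8 := by have := key u; simp [hFdef] at this; linarith
  calc (1 - p) * exp (-(p * u)) + p * exp ((1 - p) * u)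
      = exp (L u) := by
        rw [hLdef]
        simp only
        rw [exp_add, exp_log (φpos u), hφdef]
        simp only
        have h2 : exp ((1 - p) * u) = exp (-(p * u)) * exp u := by
          rw [← exp_add]; ring_nf
        rw [h2]; ring
    _ ≤ exp (u ^ 2 / 8) := exp_le_exp.2 hLle


lemma mcd_bdd_integrable {α : Type*} [MeasurableSpace α] (ν : Measure α) [IsFiniteMeasure ν]
    {f : α → ℝ} (hm : Measurable f) {B : ℝ} (hb : ∀ x, |f x| ≤ B) : Integrable f ν :=
  (integrable_const B).mono' hm.aestronglyMeasurable (Filter.Eventually.of_forall hb)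

lemma mcd_hoeffding {α : Type*} [MeasurableSpace α] (ν : Measure α) [IsProbabilityMeasure ν]
    (h : α → ℝ) (hm : Measurable h) (a b l : ℝ) (hab : ∀ x, a ≤ h x ∧ h x ≤ b)
    (h0 : ∫ x, h x ∂ν = 0) :
    ∫ x, Real.exp (l * h x) ∂ν ≤ Real.exp (l ^ 2 * (b - a) ^ 2 / 8) := by
  have hne : Nonempty α := by
    by_contra hc
    rw [not_nonempty_iff] at hc
    have h1 : ν = 0 := ν.eq_zero_of_isEmpty
    have h2 : ν Set.univ = 1 := measure_univ
    rw [h1] at h2; simp at h2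
  obtain ⟨x₀⟩ := hne
  have hints : Integrable h ν :=
    mcd_bdd_integrable ν hm (B := max |a| |b|) (fun x => by
      rcases hab x with ⟨h1, h2⟩
      rw [abs_le]
      constructor
      · have := neg_abs_le a; have := le_max_left |a| |b|; linarith
      · have := le_abs_self b; have := le_max_right |a| |b|; linarith)
  have hab' : a ≤ b := le_trans (hab x₀).1 (hab x₀).2
  have ha0 : a ≤ 0 := by
    have : ∫ _ : α, a ∂ν ≤ ∫ x, h x ∂ν :=
      integral_mono (integrable_const a) hints (fun x => (hab x).1)
    rw [h0] at this
    simpa using this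
  have hb0 : 0 ≤ b := by
    have : ∫ x, h x ∂ν ≤ ∫ _ : α, b ∂ν :=
      integral_mono hints (integrable_const b) (fun x => (hab x).2)
    rw [h0] at this
    simpa using this
  rcases eq_or_lt_of_le hab' with heq | hlt
  · -- a = b, so h ≡ 0
    have ha : a = 0 := le_antisymm ha0 (heq ▸ hb0)
    have hzero : ∀ x, h x = 0 := fun x =>
      le_antisymm (by have := (hab x).2; rw [← heq, ha] at this; exact this)
        (by have := (hab x).1; rw [ha] at this; exact this)
    simp only [hzero, mul_zero, Real.exp_zero, integral_const, measure_univ]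
    simp [Real.exp_nonneg, Real.one_le_exp_iff]
    positivity
  · -- a < b
    have hba : 0 < b - a := by linarith
    set A : ℝ := (b * exp (l * a) - a * exp (l * b)) / (b - a) with hA
    set B : ℝ := (exp (l * b) - exp (l * a)) / (b - a) with hB
    have hpt : ∀ x, exp (l * h x) ≤ A + B * h x := by
      intro x
      rcases hab x with ⟨h1, h2⟩
      have hw1 : (0:ℝ) ≤ (b - h x) / (b - a) := div_nonneg (by linarith) hba.le
      have hw2 : (0:ℝ) ≤ (h x - a) / (b - a) := div_nonneg (by linarith) hba.le
      have hws : (b - h x) / (b - a) + (h x - a) / (b - a) = 1 := by field_simp; ring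
      have hcvx := convexOn_exp.2 (Set.mem_univ (l * a)) (Set.mem_univ (l * b)) hw1 hw2 hws
      have harg : (b - h x) / (b - a) * (l * a) + (h x - a) / (b - a) * (l * b) = l * h x := by
        field_simp; ring
      simp only [smul_eq_mul] at hcvx
      rw [harg] at hcvx
      calc exp (l * h x) ≤ (b - h x) / (b - a) * exp (l * a) + (h x - a) / (b - a) * exp (l * b) :=
            hcvx
        _ = A + B * h x := by rw [hA, hB]; field_simp; ring
    have hint2 : Integrable (fun x => A + B * h x) ν :=
      (integrable_const A).add (hints.const_mul B)
    have hint1 : Integrable (fun x => exp (l * h x)) ν := by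
      refine mcd_bdd_integrable ν (by measurability) (B := exp (|l| * max |a| |b|)) (fun x => ?_)
      rw [abs_of_pos (exp_pos _)]
      apply exp_le_exp.2
      calc l * h x ≤ |l * h x| := le_abs_self _
        _ = |l| * |h x| := abs_mul _ _
        _ ≤ |l| * max |a| |b| := by
            apply mul_le_mul_of_nonneg_left _ (abs_nonneg l)
            rcases hab x with ⟨h1, h2⟩
            rw [abs_le]
            constructor
            · have := neg_abs_le a; have := le_max_left |a| |b|; linarith
            · have := le_abs_self b; have := le_max_right |a| |b|; linarith
    calc ∫ x, exp (l * h x) ∂ν ≤ ∫ x, (A + B * h x) ∂ν := integral_mono hint1 hint2 hpt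
      _ = A := by
          rw [integral_add (integrable_const A) (hints.const_mul B), integral_const,
            integral_const_mul, h0]
          simp
      _ ≤ exp (l ^ 2 * (b - a) ^ 2 / 8) := by
          set p : ℝ := -a / (b - a) with hp
          set u : ℝ := l * (b - a) with hu
          have hp0 : 0 ≤ p := div_nonneg (by linarith) hba.le
          have hp1 : p ≤ 1 := by rw [hp, div_le_one hba]; linarith
          have e1 : exp (-(p * u)) = exp (l * a) := by
            congr 1; rw [hp, hu]; field_simp
          have e2 : exp ((1 - p) * u) = exp (l * b) := by
            congr 1; rw [hp, hu]; field_simp; ring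
          have e3 : (1 - p) = b / (b - a) := by rw [hp]; field_simp; ring
          have hAeq : A = (1 - p) * exp (-(p * u)) + p * exp ((1 - p) * u) := by
            rw [e1, e2, e3, hp, hA]; field_simp; ring
          have := mcd_analytic hp0 hp1 u
          rw [hAeq]
          convert this.trans _ using 2
          apply le_of_eq
          congr 1
          rw [hu]; ring


lemma mcd_osc {Y : Type*} {m : ℕ} (g : (Fin m → Y) → ℝ) (c : Fin m → ℝ)
    (hbd : ∀ (a : Fin m → Y) (i : Fin m) (y : Y), |g a - g (Function.update a i y)| ≤ c i)
    (a b : Fin m → Y) : |g a - g b| ≤ ∑ i, c i := by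
  have key : ∀ s : Finset (Fin m), |g a - g (s.piecewise b a)| ≤ ∑ i ∈ s, c i := by
    intro s
    induction s using Finset.induction_on with
    | empty => simp
    | @insert j s hj ih =>
      rw [Finset.piecewise_insert, Finset.sum_insert hj]
      calc |g a - g (Function.update (s.piecewise b a) j (b j))|
          ≤ |g a - g (s.piecewise b a)| +
            |g (s.piecewise b a) - g (Function.update (s.piecewise b a) j (b j))| :=
            abs_sub_le _ _ _
        _ ≤ (∑ i ∈ s, c i) + c j := add_le_add ih (hbd _ _ _)
        _ = c j + ∑ i ∈ s, c i := by ring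
  have := key Finset.univ
  rwa [Finset.piecewise_univ] at this

lemma mcd_cons_measurable {Y : Type*} [MeasurableSpace Y] {m : ℕ} :
    Measurable (fun p : Y × (Fin m → Y) => (Fin.cons p.1 p.2 : Fin (m + 1) → Y)) := by
  rw [measurable_pi_iff]
  intro i
  refine Fin.cases ?_ ?_ i
  · simpa using measurable_fst
  · intro j
    simp only [Fin.cons_succ]; exact (measurable_pi_apply j).comp measurable_snd

lemma mcd_abs_int {α : Type*} [MeasurableSpace α] (ν : Measure α) (f : α → ℝ) :
    |∫ x, f x ∂ν| ≤ ∫ x, |f x| ∂ν := by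
  simpa [Real.norm_eq_abs] using norm_integral_le_integral_norm (μ := ν) f

lemma mcd_int_exp {α : Type*} [MeasurableSpace α] (ν : Measure α) [IsProbabilityMeasure ν]
    {f : α → ℝ} (hm : Measurable f) {B : ℝ} (hb : ∀ x, f x ≤ B) :
    Integrable (fun x => Real.exp (f x)) ν :=
  mcd_bdd_integrable ν (Real.measurable_exp.comp hm) (B := Real.exp B) fun x => by
    rw [abs_of_pos (Real.exp_pos _)]; exact Real.exp_le_exp.2 (hb x)

lemma mcd_mgf {Y : Type*} [MeasurableSpace Y] :
    ∀ (m : ℕ) (ν : Fin m → Measure Y), (∀ i, IsProbabilityMeasure (ν i)) →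
    ∀ (g : (Fin m → Y) → ℝ), Measurable g →
    ∀ (c : Fin m → ℝ), (∀ (a : Fin m → Y) (i : Fin m) (y : Y),
      |g a - g (Function.update a i y)| ≤ c i) →
    ∀ l : ℝ, Nonempty (Fin m → Y) →
    ∫ y, Real.exp (l * ((∫ z, g z ∂(Measure.pi ν)) - g y)) ∂(Measure.pi ν)
      ≤ Real.exp (l ^ 2 * (∑ i, (c i) ^ 2) / 8) := by
  intro m
  induction m with
  | zero =>
    intro ν hν g hg c hbd l hne
    haveI : ∀ i, IsProbabilityMeasure (ν i) := hν
    haveI : IsProbabilityMeasure (Measure.pi ν) := by infer_instance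
    have hconst : ∀ z : Fin 0 → Y, g z = g (fun i => i.elim0) := by
      intro z; congr 1; funext i; exact i.elim0
    have h1 : (∫ z, g z ∂(Measure.pi ν)) = g (fun i => i.elim0) := by
      rw [show (fun z => g z) = (fun _ : Fin 0 → Y => g (fun i => i.elim0)) from funext hconst]
      simp
    rw [h1]
    have h2 : (fun y : Fin 0 → Y => Real.exp (l * (g (fun i => i.elim0) - g y)))
        = fun _ => (1 : ℝ) := by
      funext y; rw [hconst y]; simp
    rw [h2]
    simp
  | succ m IH =>
    intro ν hν g hg c hbd l hne
    haveI : ∀ i, IsProbabilityMeasure (ν i) := hν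
    haveI : IsProbabilityMeasure (Measure.pi ν) := inferInstance
    obtain ⟨w₀⟩ := hne
    have hY : Nonempty Y := ⟨w₀ 0⟩
    obtain ⟨y₀⟩ := hY
    set νt : Fin m → Measure Y := fun j => ν j.succ with hνt
    haveI : ∀ j, IsProbabilityMeasure (νt j) := fun j => hν j.succ
    haveI : IsProbabilityMeasure (Measure.pi νt) := inferInstance
    set Pm : Measure (Fin (m + 1) → Y) := Measure.pi ν with hPm
    set Pt : Measure (Fin m → Y) := Measure.pi νt with hPt
    set e := MeasurableEquiv.piFinSuccAbove (fun _ : Fin (m + 1) => Y) 0 with he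
    have hmp : MeasurePreserving e Pm ((ν 0).prod Pt) := measurePreserving_piFinSuccAbove ν 0
    have hesymm : ∀ p : Y × (Fin m → Y), e.symm p = Fin.cons p.1 p.2 := by
      intro p
      show (Fin.insertNthEquiv (fun _ => Y) 0) p = _
      simp [Fin.insertNthEquiv, Fin.insertNth_zero']
    have hcomp : ∀ F : (Fin (m + 1) → Y) → ℝ,
        ∫ w, F w ∂Pm = ∫ p, F (Fin.cons p.1 p.2) ∂((ν 0).prod Pt) := by
      intro F
      have h1 := (hmp.symm).integral_comp e.symm.measurableEmbedding F
      rw [← h1]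
      congr 1
      funext p
      rw [hesymm p]
    -- boundedness
    set Bg : ℝ := |g w₀| + ∑ i, c i with hBg
    have hc0 : ∀ i, 0 ≤ c i := by
      intro i
      have := hbd w₀ i (w₀ i)
      rwa [Function.update_eq_self, sub_self, abs_zero] at this
    have hgb : ∀ w, |g w| ≤ Bg := by
      intro w
      have h1 := mcd_osc g c hbd w w₀
      have h2 := abs_sub_abs_le_abs_sub (g w) (g w₀)
      rw [hBg]; linarith
    have hBg0 : 0 ≤ Bg := le_trans (abs_nonneg _) (hgb w₀)
    set E : ℝ := ∫ w, g w ∂Pm with hE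
    have hgint : Integrable g Pm := mcd_bdd_integrable Pm hg hgb
    have hEb : |E| ≤ Bg := by
      rw [hE]
      calc |∫ w, g w ∂Pm| ≤ ∫ w, |g w| ∂Pm := mcd_abs_int _ _
        _ ≤ ∫ _, Bg ∂Pm := integral_mono hgint.abs (integrable_const _) hgb
        _ = Bg := by simp
    -- the conditional mean over the first coordinate
    set g' : (Fin m → Y) → ℝ := fun z => ∫ y, g (Fin.cons y z) ∂(ν 0) with hg'
    have hconsym : Measurable (fun q : (Fin m → Y) × Y => g (Fin.cons q.2 q.1)) :=
      hg.comp (mcd_cons_measurable.comp (measurable_snd.prodMk measurable_fst))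
    have hg'm : Measurable g' :=
      hconsym.stronglyMeasurable.integral_prod_right'.measurable
    have hconsz : ∀ z : Fin m → Y, Measurable (fun y => g (Fin.cons y z)) := fun z =>
      hg.comp (mcd_cons_measurable.comp (measurable_id.prodMk measurable_const))
    have hconszint : ∀ z, Integrable (fun y => g (Fin.cons y z)) (ν 0) := fun z =>
      mcd_bdd_integrable _ (hconsz z) (fun y => hgb _)
    have hg'b : ∀ z, |g' z| ≤ Bg := by
      intro z
      rw [hg']
      calc |∫ y, g (Fin.cons y z) ∂(ν 0)| ≤ ∫ y, |g (Fin.cons y z)| ∂(ν 0) :=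
            mcd_abs_int _ _
        _ ≤ ∫ _, Bg ∂(ν 0) := integral_mono (hconszint z).abs (integrable_const _)
            (fun y => hgb _)
        _ = Bg := by simp
    have hg'bd : ∀ (z : Fin m → Y) (j : Fin m) (w : Y),
        |g' z - g' (Function.update z j w)| ≤ c j.succ := by
      intro z j w
      rw [hg']
      simp only
      rw [← integral_sub (hconszint z) (hconszint _)]
      calc |∫ y, (g (Fin.cons y z) - g (Fin.cons y (Function.update z j w))) ∂(ν 0)|
          ≤ ∫ y, |g (Fin.cons y z) - g (Fin.cons y (Function.update z j w))| ∂(ν 0) :=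
            mcd_abs_int _ _
        _ ≤ ∫ _, c j.succ ∂(ν 0) := by
            refine integral_mono ((hconszint z).sub (hconszint _)).abs (integrable_const _) ?_
            intro y
            have := hbd (Fin.cons y z) j.succ w
            rwa [← Fin.cons_update] at this
        _ = c j.succ := by simp
    -- E = mean of g'
    have hgconsm : Measurable (fun p : Y × (Fin m → Y) => g (Fin.cons p.1 p.2)) :=
      hg.comp mcd_cons_measurable
    have hgconsint : Integrable (fun p : Y × (Fin m → Y) => g (Fin.cons p.1 p.2))
        ((ν 0).prod Pt) := mcd_bdd_integrable _ hgconsm (fun p => hgb _)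
    have hEeq : E = ∫ z, g' z ∂Pt := by
      rw [hE, hcomp g, integral_prod_symm _ hgconsint]
    -- the key conditional Hoeffding bound
    have harg_bd : ∀ w : Fin (m + 1) → Y, l * (E - g w) ≤ |l| * (2 * Bg) := by
      intro w
      calc l * (E - g w) ≤ |l * (E - g w)| := le_abs_self _
        _ = |l| * |E - g w| := abs_mul _ _
        _ ≤ |l| * (2 * Bg) := by
            refine mul_le_mul_of_nonneg_left ?_ (abs_nonneg l)
            have := abs_sub _ _ |>.trans (add_le_add hEb (hgb w))
            linarith [abs_sub (E) (g w), hEb, hgb w]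
    have key : ∀ z : Fin m → Y, ∫ y, Real.exp (l * (E - g (Fin.cons y z))) ∂(ν 0)
        ≤ Real.exp (l * (E - g' z)) * Real.exp (l ^ 2 * (c 0) ^ 2 / 8) := by
      intro z
      set h : Y → ℝ := fun y => g' z - g (Fin.cons y z) with hh
      have hdm : Measurable h := measurable_const.sub (hconsz z)
      have hrange_ne : (Set.range h).Nonempty := ⟨h y₀, ⟨y₀, rfl⟩⟩
      have hbddA : BddAbove (Set.range h) := by
        refine ⟨2 * Bg, ?_⟩
        rintro r ⟨y, rfl⟩
        have h1 := hg'b z; have h2 := hgb (Fin.cons y z)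
        rw [hh]
        have := abs_le.1 h1; have := abs_le.1 h2
        simp only
        linarith [(abs_le.1 h1).2, (abs_le.1 h2).1]
      set b : ℝ := sSup (Set.range h) with hbdef
      have hub : ∀ y, h y ≤ b := fun y => le_csSup hbddA ⟨y, rfl⟩
      have hlb : ∀ y, b - c 0 ≤ h y := by
        intro y
        have hstep : ∀ y', h y' ≤ h y + c 0 := by
          intro y'
          have h1 := hbd (Fin.cons y z) 0 y'
          rw [Fin.update_cons_zero] at h1
          have := abs_le.1 h1
          rw [hh]; simp only
          linarith [this.1]
        have : b ≤ h y + c 0 := csSup_le hrange_ne (by rintro r ⟨y', rfl⟩; exact hstep y')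
        linarith
      have hmean : ∫ y, h y ∂(ν 0) = 0 := by
        rw [hh]
        simp only
        rw [integral_sub (integrable_const _) (hconszint z), integral_const]
        simp [hg']
      have hhoef := mcd_hoeffding (ν 0) h hdm (b - c 0) b l (fun y => ⟨hlb y, hub y⟩) hmean
      have hhoef' : ∫ y, Real.exp (l * h y) ∂(ν 0) ≤ Real.exp (l ^ 2 * (c 0) ^ 2 / 8) := by
        refine hhoef.trans (le_of_eq ?_)
        congr 1
        ring
      calc ∫ y, Real.exp (l * (E - g (Fin.cons y z))) ∂(ν 0)
          = ∫ y, Real.exp (l * (E - g' z)) * Real.exp (l * h y) ∂(ν 0) := by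
            congr 1
            funext y
            rw [← Real.exp_add, hh]
            simp only
            ring_nf
        _ = Real.exp (l * (E - g' z)) * ∫ y, Real.exp (l * h y) ∂(ν 0) :=
            integral_const_mul _ _
        _ ≤ Real.exp (l * (E - g' z)) * Real.exp (l ^ 2 * (c 0) ^ 2 / 8) :=
            mul_le_mul_of_nonneg_left hhoef' (Real.exp_pos _).le
    -- put it together
    have hexpint : Integrable (fun p : Y × (Fin m → Y) =>
        Real.exp (l * (E - g (Fin.cons p.1 p.2)))) ((ν 0).prod Pt) :=
      mcd_int_exp _ (measurable_const.mul (measurable_const.sub hgconsm)) (fun p => harg_bd _)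
    have hi1 : Integrable (fun z => ∫ y, Real.exp (l * (E - g (Fin.cons y z))) ∂(ν 0)) Pt := by
      refine mcd_bdd_integrable _ ?_ (B := Real.exp (|l| * (2 * Bg))) ?_
      · exact (Real.measurable_exp.comp (measurable_const.mul
          (measurable_const.sub hconsym))).stronglyMeasurable.integral_prod_right'.measurable
      · intro z
        have h1 : ∀ y, Real.exp (l * (E - g (Fin.cons y z))) ≤ Real.exp (|l| * (2 * Bg)) :=
          fun y => Real.exp_le_exp.2 (harg_bd _)
        have hpos : 0 ≤ ∫ y, Real.exp (l * (E - g (Fin.cons y z))) ∂(ν 0) :=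
          integral_nonneg (fun y => (Real.exp_pos _).le)
        rw [abs_of_nonneg hpos]
        calc ∫ y, Real.exp (l * (E - g (Fin.cons y z))) ∂(ν 0)
            ≤ ∫ _, Real.exp (|l| * (2 * Bg)) ∂(ν 0) := by
              refine integral_mono ?_ (integrable_const _) h1
              exact mcd_int_exp _ (measurable_const.mul (measurable_const.sub (hconsz z)))
                (fun y => harg_bd _)
          _ = Real.exp (|l| * (2 * Bg)) := by simp
    have hi2 : Integrable (fun z => Real.exp (l * (E - g' z)) *
        Real.exp (l ^ 2 * (c 0) ^ 2 / 8)) Pt := by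
      refine Integrable.mul_const ?_ _
      refine mcd_int_exp _ (measurable_const.mul (measurable_const.sub hg'm))
        (B := |l| * (2 * Bg)) ?_
      intro z
      calc l * (E - g' z) ≤ |l * (E - g' z)| := le_abs_self _
        _ = |l| * |E - g' z| := abs_mul _ _
        _ ≤ |l| * (2 * Bg) := by
            refine mul_le_mul_of_nonneg_left ?_ (abs_nonneg l)
            linarith [abs_sub E (g' z), hEb, hg'b z, (abs_le.1 hEb).2, (abs_le.1 (hg'b z)).1]
    have hIH := IH νt (fun j => hν j.succ) g' hg'm (fun j => c j.succ) hg'bd l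
      ⟨fun _ => y₀⟩
    rw [← hEeq] at hIH
    calc ∫ y, Real.exp (l * (E - g y)) ∂Pm
        = ∫ p, Real.exp (l * (E - g (Fin.cons p.1 p.2))) ∂((ν 0).prod Pt) := hcomp _
      _ = ∫ z, ∫ y, Real.exp (l * (E - g (Fin.cons y z))) ∂(ν 0) ∂Pt :=
          integral_prod_symm _ hexpint
      _ ≤ ∫ z, Real.exp (l * (E - g' z)) * Real.exp (l ^ 2 * (c 0) ^ 2 / 8) ∂Pt :=
          integral_mono hi1 hi2 key
      _ = (∫ z, Real.exp (l * (E - g' z)) ∂Pt) * Real.exp (l ^ 2 * (c 0) ^ 2 / 8) :=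
          integral_mul_const _ _
      _ ≤ Real.exp (l ^ 2 * (∑ j : Fin m, (c j.succ) ^ 2) / 8) * Real.exp (l ^ 2 * (c 0) ^ 2 / 8) := by
          exact mul_le_mul_of_nonneg_right hIH (Real.exp_pos _).le
      _ = Real.exp (l ^ 2 * (∑ i, (c i) ^ 2) / 8) := by
          rw [← Real.exp_add]
          congr 1
          rw [Fin.sum_univ_succ]
          ring

/-- McDiarmid's inequality (one-sided, lower-deviation form): if `g` has the bounded
differences property with constants `cᵢ` and `x₁,…,x_m` are independent, then
`Pr(E[g] > g(x₁,…,x_m) + t) ≤ exp(-2t²/C)` with `C = ∑ᵢ cᵢ²`. -/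
theorem stmt7 {Ω Y : Type*} [MeasurableSpace Ω] [MeasurableSpace Y]
    (μ : Measure Ω) [IsProbabilityMeasure μ] (m : ℕ)
    (x : Fin m → Ω → Y) (hxm : ∀ i, Measurable (x i))
    (hind : iIndepFun x μ)
    (g : (Fin m → Y) → ℝ) (hg : Measurable g)
    (c : Fin m → ℝ) (hc : ∀ i, 0 ≤ c i)
    (hbd : ∀ (a : Fin m → Y) (i : Fin m) (y : Y),
      |g a - g (Function.update a i y)| ≤ c i)
    (t : ℝ) (ht : 0 ≤ t) :
    (μ {ω | (∫ ω', g (fun i => x i ω') ∂μ) > g (fun i => x i ω) + t}).toReal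
      ≤ Real.exp (-2 * t ^ 2 / (∑ i, (c i) ^ 2)) := by
  have hΩ : Nonempty Ω := by
    by_contra hcon
    rw [not_nonempty_iff] at hcon
    have h1 : μ = 0 := μ.eq_zero_of_isEmpty
    have h2 : μ Set.univ = 1 := measure_univ
    rw [h1] at h2; simp at h2
  set φ : Ω → (Fin m → Y) := fun ω i => x i ω with hφ
  have hφm : Measurable φ := measurable_pi_iff.2 hxm
  have hNE : Nonempty (Fin m → Y) := ⟨φ hΩ.some⟩
  obtain ⟨w₀⟩ := hNE
  set ν : Fin m → Measure Y := fun i => μ.map (x i) with hν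
  haveI hνP : ∀ i, IsProbabilityMeasure (ν i) := fun i =>
    Measure.isProbabilityMeasure_map (hxm i).aemeasurable
  haveI : IsProbabilityMeasure (Measure.pi ν) := inferInstance
  have hmap : μ.map φ = Measure.pi ν := by
    refine (Measure.pi_eq ?_).symm
    intro s hs
    rw [Measure.map_apply hφm (MeasurableSet.univ_pi hs)]
    have hpre : φ ⁻¹' (Set.univ.pi s) = ⋂ i, x i ⁻¹' s i := by
      ext ω; simp [Set.mem_pi, hφ]
    rw [hpre]
    have h1 := hind.measure_inter_preimage_eq_mul Finset.univ (sets := s) (fun i _ => hs i)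
    have h2 : (⋂ i, x i ⁻¹' s i) = ⋂ i ∈ Finset.univ, x i ⁻¹' s i := by simp
    rw [h2, h1]
    refine Finset.prod_congr rfl (fun i _ => ?_)
    rw [hν]
    rw [Measure.map_apply (hxm i) (hs i)]
  set E : ℝ := ∫ ω', g (fun i => x i ω') ∂μ with hE
  have hEeq : E = ∫ z, g z ∂(Measure.pi ν) := by
    rw [← hmap, integral_map hφm.aemeasurable hg.aestronglyMeasurable]
  have hsetm : MeasurableSet {y : Fin m → Y | E > g y + t} := by
    have h1 : {y : Fin m → Y | E > g y + t} = (fun y => g y + t) ⁻¹' (Set.Iio E) := rfl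
    rw [h1]; exact (hg.add measurable_const) measurableSet_Iio
  have hmeas_eq : μ {ω | E > g (fun i => x i ω) + t}
      = (Measure.pi ν) {y | E > g y + t} := by
    rw [← hmap, Measure.map_apply hφm hsetm]
    rfl
  rw [hmeas_eq]
  -- boundedness of g
  set Bg : ℝ := |g w₀| + ∑ i, c i with hBg
  have hgb : ∀ w, |g w| ≤ Bg := by
    intro w
    have h1 := mcd_osc g c hbd w w₀
    have h2 := abs_sub_abs_le_abs_sub (g w) (g w₀)
    rw [hBg]; linarith
  have hgint : Integrable g (Measure.pi ν) := mcd_bdd_integrable _ hg hgb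
  have hEb : |E| ≤ Bg := by
    rw [hEeq]
    calc |∫ w, g w ∂(Measure.pi ν)| ≤ ∫ w, |g w| ∂(Measure.pi ν) := mcd_abs_int _ _
      _ ≤ ∫ _, Bg ∂(Measure.pi ν) := integral_mono hgint.abs (integrable_const _) hgb
      _ = Bg := by simp
  set C : ℝ := ∑ i, (c i) ^ 2 with hC
  have hC0 : 0 ≤ C := Finset.sum_nonneg (fun i _ => sq_nonneg _)
  rcases eq_or_lt_of_le hC0 with hCz | hCpos
  · -- C = 0 : g is constant
    have hci : ∀ i, c i = 0 := by
      intro i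
      have h1 : (c i) ^ 2 = 0 := by
        have := Finset.sum_eq_zero_iff_of_nonneg
          (fun j (_ : j ∈ Finset.univ) => sq_nonneg (c j)) |>.1 hCz.symm i (Finset.mem_univ i)
        exact this
      exact pow_eq_zero_iff (n := 2) (by norm_num) |>.1 h1
    have hconst : ∀ y, E = g y := by
      intro y
      have h1 : E - g y = ∫ z, (g z - g y) ∂(Measure.pi ν) := by
        rw [integral_sub hgint (integrable_const _), integral_const]
        simp [hEeq]
      have h2 : |E - g y| ≤ 0 := by
        rw [h1]
        calc |∫ z, (g z - g y) ∂(Measure.pi ν)| ≤ ∫ z, |g z - g y| ∂(Measure.pi ν) :=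
            mcd_abs_int _ _
          _ ≤ ∫ _, (0:ℝ) ∂(Measure.pi ν) := by
              refine integral_mono (hgint.sub (integrable_const _)).abs (integrable_const _) ?_
              intro z
              have := mcd_osc g c hbd z y
              simpa [hci] using this
          _ = 0 := by simp
      have := abs_nonneg (E - g y)
      have h3 : |E - g y| = 0 := le_antisymm h2 this
      rw [abs_eq_zero] at h3
      linarith
    have hempty : {y : Fin m → Y | E > g y + t} = ∅ := by
      ext y
      simp only [Set.mem_setOf_eq, Set.mem_empty_iff_false, iff_false, not_lt]
      rw [← hconst y]
      linarith
    rw [hempty]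
    simp [Real.exp_nonneg]
  · -- C > 0 : Chernoff
    set l : ℝ := 4 * t / C with hl
    have hl0 : 0 ≤ l := by positivity
    have hX : Measurable (fun y : Fin m → Y => E - g y) := measurable_const.sub hg
    have hint : Integrable (fun y => Real.exp (l * (E - g y))) (Measure.pi ν) := by
      refine mcd_int_exp _ (measurable_const.mul hX) (B := |l| * (2 * Bg)) ?_
      intro y
      calc l * (E - g y) ≤ |l * (E - g y)| := le_abs_self _
        _ = |l| * |E - g y| := abs_mul _ _
        _ ≤ |l| * (2 * Bg) := by
            refine mul_le_mul_of_nonneg_left ?_ (abs_nonneg l)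
            linarith [abs_sub E (g y), hEb, hgb y, (abs_le.1 hEb).2, (abs_le.1 (hgb y)).1]
    have hchern := measure_ge_le_exp_mul_mgf (μ := Measure.pi ν)
      (X := fun y => E - g y) t hl0 hint
    have hmgf : mgf (fun y => E - g y) (Measure.pi ν) l ≤ Real.exp (l ^ 2 * C / 8) := by
      rw [mgf]
      have := mcd_mgf m ν hνP g hg c hbd l ⟨w₀⟩
      rw [← hEeq] at this
      exact this
    have hsub : (Measure.pi ν) {y | E > g y + t} ≤ (Measure.pi ν) {y | t ≤ E - g y} := by
      refine measure_mono ?_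
      intro y hy
      simp only [Set.mem_setOf_eq] at hy ⊢
      linarith
    have hsub' : ((Measure.pi ν) {y | E > g y + t}).toReal
        ≤ ((Measure.pi ν) {y | t ≤ E - g y}).toReal :=
      ENNReal.toReal_mono (measure_ne_top _ _) hsub
    calc ((Measure.pi ν) {y | E > g y + t}).toReal
        ≤ ((Measure.pi ν) {y | t ≤ E - g y}).toReal := hsub'
      _ ≤ Real.exp (-l * t) * mgf (fun y => E - g y) (Measure.pi ν) l := hchern
      _ ≤ Real.exp (-l * t) * Real.exp (l ^ 2 * C / 8) :=
          mul_le_mul_of_nonneg_left hmgf (Real.exp_pos _).le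
      _ = Real.exp (-2 * t ^ 2 / C) := by
          rw [← Real.exp_add]
          congr 1
          rw [hl]
          field_simp
          ring
end

section
/- Let $\ell_1,\dots,\ell_n$ be random variables distributed according to the Wallenius noncentral hypergeometric sampling scheme $W_n(\{m_i, w_i\})$, and let $f = \sum_{i=1}^n \ell_i$. Then for all $t \geq 0$, $\Pr(f > \mathbb{E}[f] + t) \leq \exp(-2t^2/n)$ and $\Pr(f < \mathbb{E}[f] - t) \leq \exp(-2t^2/n)$. -/
open Finset Classical

/-- Number of ones among the first `i` draws (positions `j < i`). -/
def prefOnes {n : ℕ} (ℓ : Fin n → Bool) (i : Fin n) : ℕ :=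
  (Finset.univ.filter (fun j => j < i ∧ ℓ j = true)).card

/-- Probability mass of a draw sequence `ℓ` under the Wallenius noncentral
hypergeometric sampling scheme `W_n({m₁, m₀}, {w₁, w₀})`: at each step, an item of
label `1` is drawn with probability equal to the weighted proportion of remaining
label-`1` items. -/
noncomputable def wWeight (m1 m0 : ℕ) (w1 w0 : ℝ) {n : ℕ} (ℓ : Fin n → Bool) : ℝ :=
  ∏ i : Fin n,
    (if ℓ i then
      ((m1 : ℝ) - prefOnes ℓ i) * w1 /
        (((m1 : ℝ) - prefOnes ℓ i) * w1 + ((m0 : ℝ) - ((i : ℕ) - prefOnes ℓ i : ℕ)) * w0)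
    else
      ((m0 : ℝ) - ((i : ℕ) - prefOnes ℓ i : ℕ)) * w0 /
        (((m1 : ℝ) - prefOnes ℓ i) * w1 + ((m0 : ℝ) - ((i : ℕ) - prefOnes ℓ i : ℕ)) * w0))

/-- Number of ones drawn in total: `f = ∑ᵢ ℓᵢ`. -/
noncomputable def fsum {n : ℕ} (ℓ : Fin n → Bool) : ℝ :=
  ∑ i, (if ℓ i then (1 : ℝ) else 0)

private lemma prefOnes_le {n : ℕ} (ℓ : Fin n → Bool) (i : Fin n) : prefOnes ℓ i ≤ (i : ℕ) := by
  have h2 : (Finset.univ.filter (fun j : Fin n => j < i ∧ ℓ j = true)) ⊆ Finset.Iio i := by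
    intro j hj
    simp only [Finset.mem_filter] at hj
    simpa using hj.2.1
  simpa [prefOnes, Fin.card_Iio] using Finset.card_le_card h2

private lemma prefOnes_cons_zero {n : ℕ} (b : Bool) (ℓ : Fin n → Bool) :
    prefOnes (Fin.cons b ℓ) 0 = 0 := by
  simp [prefOnes, Fin.not_lt_zero]

private lemma prefOnes_cons_succ {n : ℕ} (b : Bool) (ℓ : Fin n → Bool) (i : Fin n) :
    prefOnes (Fin.cons b ℓ) i.succ = (if b then 1 else 0) + prefOnes ℓ i := by
  rw [prefOnes, prefOnes, Finset.card_filter, Finset.card_filter, Fin.sum_univ_succ]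
  congr 1
  · simp [Fin.succ_pos]
  · apply Finset.sum_congr rfl
    intro j _
    simp [Fin.succ_lt_succ_iff]

private lemma fsum_cons {n : ℕ} (b : Bool) (ℓ : Fin n → Bool) :
    fsum (Fin.cons b ℓ) = (if b then (1:ℝ) else 0) + fsum ℓ := by
  rw [fsum, fsum, Fin.sum_univ_succ]
  simp

private lemma fsum_nonneg {n : ℕ} (ℓ : Fin n → Bool) : 0 ≤ fsum ℓ :=
  Finset.sum_nonneg fun i _ => by positivity

private lemma fsum_le {n : ℕ} (ℓ : Fin n → Bool) : fsum ℓ ≤ n := by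
  calc fsum ℓ ≤ ∑ _i : Fin n, (1:ℝ) := by
        apply Finset.sum_le_sum
        intro i _
        split <;> norm_num
    _ = n := by simp

private noncomputable def pOne (m1 m0 : ℕ) (w1 w0 : ℝ) : ℝ :=
  (m1 : ℝ) * w1 / ((m1 : ℝ) * w1 + (m0 : ℝ) * w0)

private noncomputable def pZero (m1 m0 : ℕ) (w1 w0 : ℝ) : ℝ :=
  (m0 : ℝ) * w0 / ((m1 : ℝ) * w1 + (m0 : ℝ) * w0)

private lemma wWeight_cons (m1 m0 : ℕ) (w1 w0 : ℝ) {n : ℕ} (b : Bool) (ℓ : Fin n → Bool) :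
    wWeight m1 m0 w1 w0 (Fin.cons b ℓ) =
      if b then pOne m1 m0 w1 w0 * wWeight (m1 - 1) m0 w1 w0 ℓ
      else pZero m1 m0 w1 w0 * wWeight m1 (m0 - 1) w1 w0 ℓ := by
  rw [wWeight, Fin.prod_univ_succ]
  have h0 : prefOnes (Fin.cons b ℓ) 0 = 0 := prefOnes_cons_zero b ℓ
  cases b with
  | true =>
    simp only [if_true, Fin.cons_zero, h0]
    rcases Nat.eq_zero_or_pos m1 with hm | hm
    · -- m1 = 0 : both sides are 0
      subst hm
      simp [pOne]
    · have hfac0 : ((Fin.cons true ℓ : Fin (n+1) → Bool) 0 = true) := rfl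
      -- first factor = pOne
      have hfirst : (((m1:ℝ) - (0:ℕ)) * w1 /
          (((m1:ℝ) - (0:ℕ)) * w1 + ((m0:ℝ) - (((0: Fin (n+1)):ℕ) - (0:ℕ) : ℕ)) * w0))
          = pOne m1 m0 w1 w0 := by
        simp [pOne]
      have htail : (∏ i : Fin n,
          (if (Fin.cons true ℓ : Fin (n+1) → Bool) i.succ then
            ((m1 : ℝ) - prefOnes (Fin.cons true ℓ) i.succ) * w1 /
              (((m1 : ℝ) - prefOnes (Fin.cons true ℓ) i.succ) * w1 +
                ((m0 : ℝ) - ((i.succ : ℕ) - prefOnes (Fin.cons true ℓ) i.succ : ℕ)) * w0)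
          else
            ((m0 : ℝ) - ((i.succ : ℕ) - prefOnes (Fin.cons true ℓ) i.succ : ℕ)) * w0 /
              (((m1 : ℝ) - prefOnes (Fin.cons true ℓ) i.succ) * w1 +
                ((m0 : ℝ) - ((i.succ : ℕ) - prefOnes (Fin.cons true ℓ) i.succ : ℕ)) * w0)))
          = wWeight (m1 - 1) m0 w1 w0 ℓ := by
        rw [wWeight]
        apply Finset.prod_congr rfl
        intro i _
        have hp : prefOnes (Fin.cons true ℓ) i.succ = 1 + prefOnes ℓ i :=
          prefOnes_cons_succ true ℓ i
        have hv : ((i.succ : ℕ)) = (i : ℕ) + 1 := rfl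
        have hsub : ((i.succ : ℕ) - prefOnes (Fin.cons true ℓ) i.succ : ℕ)
            = ((i : ℕ) - prefOnes ℓ i : ℕ) := by
          rw [hp, hv]; omega
        have hcast : ((m1:ℝ) - (prefOnes (Fin.cons true ℓ) i.succ : ℕ))
            = ((m1 - 1 : ℕ) : ℝ) - (prefOnes ℓ i : ℕ) := by
          rw [hp]
          have : ((m1 - 1 : ℕ) : ℝ) = (m1 : ℝ) - 1 := by
            have := Nat.cast_sub (R := ℝ) hm
            simpa using this
          rw [this]
          push_cast
          ring
        rw [Fin.cons_succ, hsub, hcast]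
      rw [hfirst, htail]
  | false =>
    simp only [if_false, Fin.cons_zero, Bool.false_eq_true, h0]
    rcases Nat.eq_zero_or_pos m0 with hm | hm
    · subst hm
      simp [pZero]
    · have hfirst : (((m0:ℝ) - (((0: Fin (n+1)):ℕ) - (0:ℕ) : ℕ)) * w0 /
          (((m1:ℝ) - (0:ℕ)) * w1 + ((m0:ℝ) - (((0: Fin (n+1)):ℕ) - (0:ℕ) : ℕ)) * w0))
          = pZero m1 m0 w1 w0 := by
        simp [pZero]
      have htail : (∏ i : Fin n,
          (if (Fin.cons false ℓ : Fin (n+1) → Bool) i.succ then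
            ((m1 : ℝ) - prefOnes (Fin.cons false ℓ) i.succ) * w1 /
              (((m1 : ℝ) - prefOnes (Fin.cons false ℓ) i.succ) * w1 +
                ((m0 : ℝ) - ((i.succ : ℕ) - prefOnes (Fin.cons false ℓ) i.succ : ℕ)) * w0)
          else
            ((m0 : ℝ) - ((i.succ : ℕ) - prefOnes (Fin.cons false ℓ) i.succ : ℕ)) * w0 /
              (((m1 : ℝ) - prefOnes (Fin.cons false ℓ) i.succ) * w1 +
                ((m0 : ℝ) - ((i.succ : ℕ) - prefOnes (Fin.cons false ℓ) i.succ : ℕ)) * w0)))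
          = wWeight m1 (m0 - 1) w1 w0 ℓ := by
        rw [wWeight]
        apply Finset.prod_congr rfl
        intro i _
        have hp : prefOnes (Fin.cons false ℓ) i.succ = prefOnes ℓ i := by
          simpa using prefOnes_cons_succ false ℓ i
        have hv : ((i.succ : ℕ)) = (i : ℕ) + 1 := rfl
        have hsub : ((i.succ : ℕ) - prefOnes (Fin.cons false ℓ) i.succ : ℕ)
            = ((i : ℕ) - prefOnes ℓ i : ℕ) + 1 := by
          rw [hp, hv]
          have := prefOnes_le ℓ i
          omega
        have hcast : ((m0:ℝ) - (((i.succ : ℕ) - prefOnes (Fin.cons false ℓ) i.succ : ℕ) : ℕ))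
            = ((m0 - 1 : ℕ) : ℝ) - ((i : ℕ) - prefOnes ℓ i : ℕ) := by
          rw [hsub]
          have h1 : ((m0 - 1 : ℕ) : ℝ) = (m0 : ℝ) - 1 := by
            have := Nat.cast_sub (R := ℝ) hm
            simpa using this
          rw [h1]
          push_cast
          ring
        rw [Fin.cons_succ, hcast, hp]
      rw [hfirst, htail]

private lemma sum_cons_cube {n : ℕ} (g : (Fin (n + 1) → Bool) → ℝ) :
    ∑ ℓ : Fin (n + 1) → Bool, g ℓ =
      (∑ ℓ : Fin n → Bool, g (Fin.cons true ℓ)) +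
      (∑ ℓ : Fin n → Bool, g (Fin.cons false ℓ)) := by
  have h := Fintype.sum_equiv (Fin.consEquiv (fun _ : Fin (n+1) => Bool))
      (fun x : Bool × (Fin n → Bool) => g (Fin.cons x.1 x.2)) g (fun x => rfl)
  rw [← h, Fintype.sum_prod_type, Fintype.sum_bool]

private lemma pOne_nonneg (m1 m0 : ℕ) {w1 w0 : ℝ} (h1 : 0 ≤ w1) (h0 : 0 ≤ w0) :
    0 ≤ pOne m1 m0 w1 w0 := by
  unfold pOne; positivity

private lemma pZero_nonneg (m1 m0 : ℕ) {w1 w0 : ℝ} (h1 : 0 ≤ w1) (h0 : 0 ≤ w0) :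
    0 ≤ pZero m1 m0 w1 w0 := by
  unfold pZero; positivity

private lemma denom_pos {m1 m0 : ℕ} {w1 w0 : ℝ} (h1 : 0 < w1) (h0 : 0 < w0)
    (hm : 1 ≤ m1 + m0) : 0 < (m1 : ℝ) * w1 + (m0 : ℝ) * w0 := by
  rcases Nat.eq_zero_or_pos m1 with h | h
  · subst h
    have : 1 ≤ m0 := by omega
    have : (1:ℝ) ≤ (m0:ℝ) := by exact_mod_cast this
    nlinarith
  · have : (1:ℝ) ≤ (m1:ℝ) := by exact_mod_cast h
    have h0' : (0:ℝ) ≤ (m0:ℝ) := by positivity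
    nlinarith

private lemma pOne_add_pZero {m1 m0 : ℕ} {w1 w0 : ℝ} (h1 : 0 < w1) (h0 : 0 < w0)
    (hm : 1 ≤ m1 + m0) : pOne m1 m0 w1 w0 + pZero m1 m0 w1 w0 = 1 := by
  have := denom_pos h1 h0 hm
  unfold pOne pZero
  field_simp

private lemma wWeight_nonneg (m1 m0 : ℕ) {w1 w0 : ℝ} (h1 : 0 ≤ w1) (h0 : 0 ≤ w0) :
    ∀ {n : ℕ} (ℓ : Fin n → Bool), 0 ≤ wWeight m1 m0 w1 w0 ℓ := by
  intro n
  induction n generalizing m1 m0 with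
  | zero => intro ℓ; rw [wWeight]; simp
  | succ n ih =>
    intro ℓ
    rw [← Fin.cons_self_tail ℓ, wWeight_cons]
    cases hb : ℓ 0 with
    | true =>
      rw [if_pos rfl]
      exact mul_nonneg (pOne_nonneg _ _ h1 h0) (ih _ _ _)
    | false =>
      rw [if_neg (by simp)]
      exact mul_nonneg (pZero_nonneg _ _ h1 h0) (ih _ _ _)

private lemma wSum_eq_one {w1 w0 : ℝ} (h1 : 0 < w1) (h0 : 0 < w0) :
    ∀ (n m1 m0 : ℕ), n ≤ m1 + m0 →
      (∑ ℓ : Fin n → Bool, wWeight m1 m0 w1 w0 ℓ) = 1 := by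
  intro n
  induction n with
  | zero =>
    intro m1 m0 _
    calc (∑ ℓ : Fin 0 → Bool, wWeight m1 m0 w1 w0 ℓ)
        = ∑ _ℓ : Fin 0 → Bool, (1:ℝ) :=
          Finset.sum_congr rfl (fun ℓ _ => by rw [wWeight]; simp)
      _ = 1 := by simp
  | succ n ih =>
    intro m1 m0 hm
    rw [sum_cons_cube (fun ℓ => wWeight m1 m0 w1 w0 ℓ)]
    simp only [wWeight_cons]
    simp only [if_true, Bool.false_eq_true, if_false]
    rw [← Finset.mul_sum, ← Finset.mul_sum]
    rcases Nat.eq_zero_or_pos m1 with hm1 | hm1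
    · subst hm1
      have hz : pOne 0 m0 w1 w0 = 0 := by unfold pOne; simp
      have ho : pZero 0 m0 w1 w0 = 1 := by
        unfold pZero
        have hpos : (0:ℝ) < (m0:ℝ) * w0 := by
          have : (0:ℝ) < (m0:ℝ) := by exact_mod_cast (by omega : 0 < m0)
          positivity
        rw [Nat.cast_zero, zero_mul, zero_add, div_self hpos.ne']
      rw [hz, ho, ih 0 (m0 - 1) (by omega)]
      ring
    rcases Nat.eq_zero_or_pos m0 with hm0 | hm0
    · subst hm0
      have hz : pZero m1 0 w1 w0 = 0 := by unfold pZero; simp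
      have ho : pOne m1 0 w1 w0 = 1 := by
        unfold pOne
        have hpos : (0:ℝ) < (m1:ℝ) * w1 := by
          have : (0:ℝ) < (m1:ℝ) := by exact_mod_cast hm1
          positivity
        rw [Nat.cast_zero, zero_mul, add_zero, div_self hpos.ne']
      rw [hz, ho, ih (m1 - 1) 0 (by omega)]
      ring
    · rw [ih (m1 - 1) m0 (by omega), ih m1 (m0 - 1) (by omega)]
      rw [mul_one, mul_one]
      exact pOne_add_pZero h1 h0 (by omega)

private noncomputable def wMean (m1 m0 : ℕ) (w1 w0 : ℝ) (n : ℕ) : ℝ :=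
  ∑ ℓ : Fin n → Bool, wWeight m1 m0 w1 w0 ℓ * fsum ℓ

private lemma wMean_zero (m1 m0 : ℕ) (w1 w0 : ℝ) : wMean m1 m0 w1 w0 0 = 0 := by
  rw [wMean]
  apply Finset.sum_eq_zero
  intro ℓ _
  rw [fsum]
  simp

private lemma wMean_succ {w1 w0 : ℝ} (h1 : 0 < w1) (h0 : 0 < w0) {n m1 m0 : ℕ}
    (hm : n + 1 ≤ m1 + m0) :
    wMean m1 m0 w1 w0 (n + 1) =
      pOne m1 m0 w1 w0 * (1 + wMean (m1 - 1) m0 w1 w0 n) +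
        pZero m1 m0 w1 w0 * wMean m1 (m0 - 1) w1 w0 n := by
  rw [wMean, sum_cons_cube (fun ℓ => wWeight m1 m0 w1 w0 ℓ * fsum ℓ)]
  simp only [wWeight_cons, fsum_cons, if_true, Bool.false_eq_true, if_false, zero_add]
  have hA : (∑ ℓ : Fin n → Bool,
      pOne m1 m0 w1 w0 * wWeight (m1 - 1) m0 w1 w0 ℓ * (1 + fsum ℓ))
      = pOne m1 m0 w1 w0 * ((∑ ℓ : Fin n → Bool, wWeight (m1 - 1) m0 w1 w0 ℓ)
          + wMean (m1 - 1) m0 w1 w0 n) := by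
    rw [wMean, mul_add, Finset.mul_sum, Finset.mul_sum, ← Finset.sum_add_distrib]
    apply Finset.sum_congr rfl
    intro ℓ _
    ring
  have hB : (∑ ℓ : Fin n → Bool,
      pZero m1 m0 w1 w0 * wWeight m1 (m0 - 1) w1 w0 ℓ * fsum ℓ)
      = pZero m1 m0 w1 w0 * wMean m1 (m0 - 1) w1 w0 n := by
    rw [wMean, Finset.mul_sum]
    apply Finset.sum_congr rfl
    intro ℓ _
    ring
  rw [hA, hB]
  rcases Nat.eq_zero_or_pos m1 with hm1 | hm1
  · subst hm1
    have hz : pOne 0 m0 w1 w0 = 0 := by unfold pOne; simp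
    rw [hz]
    ring
  · rw [wSum_eq_one h1 h0 n (m1 - 1) m0 (by omega)]

private lemma wMean_nonneg (m1 m0 : ℕ) {w1 w0 : ℝ} (h1 : 0 ≤ w1) (h0 : 0 ≤ w0) (n : ℕ) :
    0 ≤ wMean m1 m0 w1 w0 n := by
  apply Finset.sum_nonneg
  intro ℓ _
  exact mul_nonneg (wWeight_nonneg m1 m0 h1 h0 ℓ) (fsum_nonneg ℓ)

private lemma pOne_le_one {m1 m0 : ℕ} {w1 w0 : ℝ} (h1 : 0 < w1) (h0 : 0 < w0) :
    pOne m1 m0 w1 w0 ≤ 1 := by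
  unfold pOne
  rcases Nat.eq_zero_or_pos (m1 + m0) with h | h
  · have : m1 = 0 := by omega
    subst this
    simp
  · apply div_le_one_of_le₀
    · have : (0:ℝ) ≤ (m0:ℝ) * w0 := by positivity
      linarith
    · exact le_of_lt (denom_pos h1 h0 h)

private lemma pOne_mono {w1 w0 : ℝ} (h1 : 0 < w1) (h0 : 0 < w0) (a b : ℕ) :
    pOne a (b + 1) w1 w0 ≤ pOne (a + 1) b w1 w0 := by
  unfold pOne
  have d1 : 0 < (a:ℝ) * w1 + ((b+1 : ℕ):ℝ) * w0 := denom_pos h1 h0 (by omega)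
  have d2 : 0 < ((a+1 : ℕ):ℝ) * w1 + (b:ℝ) * w0 := denom_pos h1 h0 (by omega)
  rw [div_le_div_iff₀ d1 d2]
  have ha : (0:ℝ) ≤ (a:ℝ) := Nat.cast_nonneg a
  have hb : (0:ℝ) ≤ (b:ℝ) := Nat.cast_nonneg b
  push_cast
  nlinarith [mul_pos h1 h0]

private lemma wMean_mono {w1 w0 : ℝ} (h1 : 0 < w1) (h0 : 0 < w0) :
    ∀ (n a b : ℕ), n ≤ a + b + 1 →
      0 ≤ wMean (a + 1) b w1 w0 n - wMean a (b + 1) w1 w0 n ∧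
      wMean (a + 1) b w1 w0 n - wMean a (b + 1) w1 w0 n ≤ 1 := by
  intro n
  induction n with
  | zero =>
    intro a b _
    rw [wMean_zero, wMean_zero]
    norm_num
  | succ n ih =>
    intro a b hab
    have hA1 : wMean (a + 1) b w1 w0 (n + 1) =
        pOne (a + 1) b w1 w0 * (1 + wMean a b w1 w0 n) +
          pZero (a + 1) b w1 w0 * wMean (a + 1) (b - 1) w1 w0 n := by
      have := wMean_succ h1 h0 (n := n) (m1 := a + 1) (m0 := b) (by omega)
      simpa using this
    have hA0 : wMean a (b + 1) w1 w0 (n + 1) =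
        pOne a (b + 1) w1 w0 * (1 + wMean (a - 1) (b + 1) w1 w0 n) +
          pZero a (b + 1) w1 w0 * wMean a b w1 w0 n := by
      have := wMean_succ h1 h0 (n := n) (m1 := a) (m0 := b + 1) (by omega)
      simpa using this
    rw [hA1, hA0]
    rcases Nat.eq_zero_or_pos b with hb | hb
    · subst hb
      have hQ : pZero (a + 1) 0 w1 w0 = 0 := by unfold pZero; simp
      have hP : pOne (a + 1) 0 w1 w0 = 1 := by
        unfold pOne
        have hp : (0:ℝ) < ((a+1 : ℕ):ℝ) * w1 := by positivity
        rw [Nat.cast_zero, zero_mul, add_zero, div_self hp.ne']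
      rcases Nat.eq_zero_or_pos a with ha | ha
      · subst ha
        have hP' : pOne 0 1 w1 w0 = 0 := by unfold pOne; simp
        have hQ' : pZero 0 1 w1 w0 = 1 := by
          unfold pZero
          have hp : (0:ℝ) < ((1:ℕ):ℝ) * w0 := by positivity
          rw [Nat.cast_zero, zero_mul, zero_add, div_self hp.ne']
        simp only [zero_add] at hP' hQ' ⊢
        rw [hP, hQ, hP', hQ']
        norm_num
      · -- a ≥ 1, b = 0
        simp only [zero_add] at *
        have hsum : pOne a 1 w1 w0 + pZero a 1 w1 w0 = 1 :=
          pOne_add_pZero h1 h0 (by omega)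
        have hP'0 : 0 ≤ pOne a 1 w1 w0 := pOne_nonneg _ _ h1.le h0.le
        have hQ'0 : 0 ≤ pZero a 1 w1 w0 := pZero_nonneg _ _ h1.le h0.le
        obtain ⟨hd1, hd2⟩ := ih (a - 1) 0 (by omega)
        have he : a - 1 + 1 = a := by omega
        rw [he] at hd1 hd2
        simp only [zero_add] at hd1 hd2
        rw [hP, hQ]
        set P' := pOne a 1 w1 w0
        set Q' := pZero a 1 w1 w0
        set x := wMean a 0 w1 w0 n
        set z := wMean (a - 1) 1 w1 w0 n
        set u := wMean (a + 1) (0 - 1) w1 w0 n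
        have hid : 1 * (1 + x) + 0 * u - (P' * (1 + z) + Q' * x)
            = (1 - (P' + Q')) + Q' + P' * (x - z) + x * (1 - (P' + Q')) := by ring
        rw [hid, hsum, sub_self, zero_add, mul_zero, add_zero]
        have h₂ : 0 ≤ P' * (x - z) := mul_nonneg hP'0 hd1
        have h₃ : P' * (x - z) ≤ P' * 1 := mul_le_mul_of_nonneg_left hd2 hP'0
        constructor <;> linarith
    · -- b ≥ 1
      obtain ⟨c, rfl⟩ : ∃ c, b = c + 1 := ⟨b - 1, by omega⟩
      simp only [show c + 1 - 1 = c from rfl, show c + 1 + 1 = c + 2 from rfl] at *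
      have hsum1 : pOne (a + 1) (c + 1) w1 w0 + pZero (a + 1) (c + 1) w1 w0 = 1 :=
        pOne_add_pZero h1 h0 (by omega)
      have hP0 : 0 ≤ pOne (a + 1) (c + 1) w1 w0 := pOne_nonneg _ _ h1.le h0.le
      have hQ0 : 0 ≤ pZero (a + 1) (c + 1) w1 w0 := pZero_nonneg _ _ h1.le h0.le
      rcases Nat.eq_zero_or_pos a with ha | ha
      · subst ha
        simp only [zero_add] at *
        have hP' : pOne 0 (c + 2) w1 w0 = 0 := by unfold pOne; simp
        have hQ' : pZero 0 (c + 2) w1 w0 = 1 := by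
          unfold pZero
          have hp : (0:ℝ) < ((c + 2 : ℕ):ℝ) * w0 := by positivity
          rw [Nat.cast_zero, zero_mul, zero_add, div_self hp.ne']
        obtain ⟨hd1, hd2⟩ := ih 0 c (by omega)
        simp only [zero_add] at hd1 hd2
        rw [hP', hQ']
        set P := pOne 1 (c + 1) w1 w0
        set Q := pZero 1 (c + 1) w1 w0
        set x := wMean 0 (c + 1) w1 w0 n
        set y := wMean 1 c w1 w0 n
        set z := wMean (0 - 1) (c + 2) w1 w0 n
        have hid : P * (1 + x) + Q * y - (0 * (1 + z) + 1 * x)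
            = P + Q * (y - x) + x * ((P + Q) - 1) := by ring
        rw [hid, hsum1]
        have h₂ : 0 ≤ Q * (y - x) := mul_nonneg hQ0 hd1
        have h₃ : Q * (y - x) ≤ Q * 1 := mul_le_mul_of_nonneg_left hd2 hQ0
        constructor <;> nlinarith [hsum1, hP0, hQ0, h₂, h₃]
      · -- main case a ≥ 1, b ≥ 1
        obtain ⟨k, rfl⟩ : ∃ k, a = k + 1 := ⟨a - 1, by omega⟩
        simp only [show k + 1 - 1 = k from rfl, show k + 1 + 1 = k + 2 from rfl] at *
        have hsum2 : pOne (k + 1) (c + 2) w1 w0 + pZero (k + 1) (c + 2) w1 w0 = 1 :=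
          pOne_add_pZero h1 h0 (by omega)
        have hP'0 : 0 ≤ pOne (k + 1) (c + 2) w1 w0 := pOne_nonneg _ _ h1.le h0.le
        have hQ'0 : 0 ≤ pZero (k + 1) (c + 2) w1 w0 := pZero_nonneg _ _ h1.le h0.le
        have hPP' : pOne (k + 1) (c + 2) w1 w0 ≤ pOne (k + 2) (c + 1) w1 w0 := by
          have := pOne_mono h1 h0 (k + 1) (c + 1)
          simpa [show k + 1 + 1 = k + 2 from rfl, show c + 1 + 1 = c + 2 from rfl] using this
        obtain ⟨hd11, hd12⟩ := ih (k + 1) c (by omega)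
        obtain ⟨hd21, hd22⟩ := ih k (c + 1) (by omega)
        simp only [show k + 1 + 1 = k + 2 from rfl, show c + 1 + 1 = c + 2 from rfl]
          at hd11 hd12 hd21 hd22
        set P := pOne (k + 2) (c + 1) w1 w0
        set Q := pZero (k + 2) (c + 1) w1 w0
        set P' := pOne (k + 1) (c + 2) w1 w0
        set Q' := pZero (k + 1) (c + 2) w1 w0
        set x := wMean (k + 1) (c + 1) w1 w0 n
        set y := wMean (k + 2) c w1 w0 n
        set z := wMean k (c + 2) w1 w0 n
        have hid : P * (1 + x) + Q * y - (P' * (1 + z) + Q' * x)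
            = (P - P') + Q * (y - x) + P' * (x - z) + x * ((P + Q) - (P' + Q')) := by ring
        rw [hid, hsum1, hsum2, sub_self, mul_zero, add_zero]
        have h₂ : 0 ≤ Q * (y - x) := mul_nonneg hQ0 hd11
        have h₃ : Q * (y - x) ≤ Q * 1 := mul_le_mul_of_nonneg_left hd12 hQ0
        have h₄ : 0 ≤ P' * (x - z) := mul_nonneg hP'0 hd21
        have h₅ : P' * (x - z) ≤ P' * 1 := mul_le_mul_of_nonneg_left hd22 hP'0
        constructor <;> nlinarith [hsum1, hsum2, hP0, hQ0, hP'0, hQ'0, hPP']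


private noncomputable def Ffun (p x : ℝ) : ℝ :=
  p * Real.exp ((1 - p) * x) + (1 - p) * Real.exp (-(p * x))

private lemma Ffun_pos {p : ℝ} (hp : 0 ≤ p) (hp1 : p ≤ 1) (x : ℝ) : 0 < Ffun p x := by
  rcases eq_or_lt_of_le hp with h | h
  · simp [Ffun, ← h]
  · have h2 : 0 ≤ 1 - p := by linarith
    have := Real.exp_pos ((1 - p) * x)
    have := Real.exp_pos (-(p * x))
    unfold Ffun
    nlinarith

private lemma hasDerivAt_Ffun (p x : ℝ) :
    HasDerivAt (Ffun p)
      (p * (1 - p) * Real.exp ((1 - p) * x) - (1 - p) * p * Real.exp (-(p * x))) x := by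
  have h1 : HasDerivAt (fun y : ℝ => Real.exp ((1 - p) * y))
      (Real.exp ((1 - p) * x) * ((1 - p) * 1)) x :=
    ((hasDerivAt_id x).const_mul (1 - p)).exp
  have h2 : HasDerivAt (fun y : ℝ => Real.exp (-(p * y)))
      (Real.exp (-(p * x)) * (-(p * 1))) x :=
    ((hasDerivAt_id x).const_mul p).neg.exp
  have := (h1.const_mul p).add (h2.const_mul (1 - p))
  refine this.congr_deriv ?_
  ring

private noncomputable def Gfun (p x : ℝ) : ℝ :=
  x / 4 - (p * (1 - p) * Real.exp ((1 - p) * x) - (1 - p) * p * Real.exp (-(p * x))) / Ffun p x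

private lemma hasDerivAt_gfun {p : ℝ} (hp : 0 ≤ p) (hp1 : p ≤ 1) (x : ℝ) :
    HasDerivAt (fun y => y ^ 2 / 8 - Real.log (Ffun p y)) (Gfun p x) x := by
  have h1 : HasDerivAt (fun y : ℝ => y ^ 2 / 8) (x / 4) x := by
    have := (hasDerivAt_pow 2 x).div_const 8
    refine this.congr_deriv ?_
    ring
  have h2 := (hasDerivAt_Ffun p x).log (Ffun_pos hp hp1 x).ne'
  exact h1.sub h2

private lemma hasDerivAt_Gfun {p : ℝ} (hp : 0 ≤ p) (hp1 : p ≤ 1) (x : ℝ) :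
    HasDerivAt (Gfun p)
      (1 / 4 -
        ((p * (1 - p) * ((1 - p) * Real.exp ((1 - p) * x))
            + (1 - p) * p * (p * Real.exp (-(p * x)))) * Ffun p x -
          (p * (1 - p) * Real.exp ((1 - p) * x) - (1 - p) * p * Real.exp (-(p * x))) *
            (p * (1 - p) * Real.exp ((1 - p) * x) - (1 - p) * p * Real.exp (-(p * x)))) /
          (Ffun p x) ^ 2) x := by
  have h1 : HasDerivAt (fun y : ℝ => y / 4) (1 / 4) x := by
    simpa using (hasDerivAt_id x).div_const 4
  have hE1 : HasDerivAt (fun y : ℝ => Real.exp ((1 - p) * y))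
      (Real.exp ((1 - p) * x) * ((1 - p) * 1)) x :=
    ((hasDerivAt_id x).const_mul (1 - p)).exp
  have hE2 : HasDerivAt (fun y : ℝ => Real.exp (-(p * y)))
      (Real.exp (-(p * x)) * (-(p * 1))) x :=
    ((hasDerivAt_id x).const_mul p).neg.exp
  have hnum : HasDerivAt
      (fun y => p * (1 - p) * Real.exp ((1 - p) * y) - (1 - p) * p * Real.exp (-(p * y)))
      (p * (1 - p) * ((1 - p) * Real.exp ((1 - p) * x))
        + (1 - p) * p * (p * Real.exp (-(p * x)))) x := by
    have := (hE1.const_mul (p * (1 - p))).sub (hE2.const_mul ((1 - p) * p))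
    refine this.congr_deriv ?_
    ring
  have hdiv := hnum.div (hasDerivAt_Ffun p x) (Ffun_pos hp hp1 x).ne'
  exact h1.sub hdiv

private lemma Gfun_deriv_nonneg {p : ℝ} (hp : 0 ≤ p) (hp1 : p ≤ 1) (x : ℝ) :
    0 ≤ deriv (Gfun p) x := by
  rw [(hasDerivAt_Gfun hp hp1 x).deriv]
  set E1 := Real.exp ((1 - p) * x) with hE1
  set E2 := Real.exp (-(p * x)) with hE2
  have hF : Ffun p x = p * E1 + (1 - p) * E2 := rfl
  have hFpos := Ffun_pos hp hp1 x
  have hkey : (p * (1 - p) * ((1 - p) * E1) + (1 - p) * p * (p * E2)) * Ffun p x -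
      (p * (1 - p) * E1 - (1 - p) * p * E2) * (p * (1 - p) * E1 - (1 - p) * p * E2)
      = (p * E1) * ((1 - p) * E2) := by
    rw [hF]; ring
  rw [hkey]
  have hb : (p * E1) * ((1 - p) * E2) / (Ffun p x) ^ 2 ≤ 1 / 4 := by
    rw [div_le_iff₀ (by positivity)]
    rw [hF]
    nlinarith [sq_nonneg (p * E1 - (1 - p) * E2), Real.exp_pos ((1 - p) * x),
      Real.exp_pos (-(p * x)), mul_nonneg hp (Real.exp_pos ((1 - p) * x)).le,
      mul_nonneg (by linarith : (0:ℝ) ≤ 1 - p) (Real.exp_pos (-(p * x))).le]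
  linarith

private lemma Gfun_zero (p : ℝ) : Gfun p 0 = 0 := by
  have : Ffun p 0 = 1 := by simp [Ffun]
  simp [Gfun, this]
  ring

private lemma Gfun_nonneg_of_nonneg {p : ℝ} (hp : 0 ≤ p) (hp1 : p ≤ 1) {x : ℝ} (hx : 0 ≤ x) :
    0 ≤ Gfun p x := by
  have hmono : Monotone (Gfun p) :=
    monotone_of_deriv_nonneg (fun y => (hasDerivAt_Gfun hp hp1 y).differentiableAt)
      (Gfun_deriv_nonneg hp hp1)
  have := hmono hx
  rwa [Gfun_zero] at this

private lemma Gfun_nonpos_of_nonpos {p : ℝ} (hp : 0 ≤ p) (hp1 : p ≤ 1) {x : ℝ} (hx : x ≤ 0) :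
    Gfun p x ≤ 0 := by
  have hmono : Monotone (Gfun p) :=
    monotone_of_deriv_nonneg (fun y => (hasDerivAt_Gfun hp hp1 y).differentiableAt)
      (Gfun_deriv_nonneg hp hp1)
  have := hmono hx
  rwa [Gfun_zero] at this

/-- Hoeffding's lemma, two-point scalar form. -/
private lemma hoeffding_scalar {p : ℝ} (hp : 0 ≤ p) (hp1 : p ≤ 1) (s : ℝ) :
    p * Real.exp ((1 - p) * s) + (1 - p) * Real.exp (-(p * s)) ≤ Real.exp (s ^ 2 / 8) := by
  set g : ℝ → ℝ := fun y => y ^ 2 / 8 - Real.log (Ffun p y) with hg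
  have hdiff : Differentiable ℝ g := fun y => (hasDerivAt_gfun hp hp1 y).differentiableAt
  have hg0 : g 0 = 0 := by
    have : Ffun p 0 = 1 := by simp [Ffun]
    simp [hg, this]
  have hgs : 0 ≤ g s := by
    rcases le_total 0 s with hs | hs
    · have hmono : MonotoneOn g (Set.Ici (0 : ℝ)) := by
        apply monotoneOn_of_deriv_nonneg (convex_Ici 0) hdiff.continuous.continuousOn
          hdiff.differentiableOn
        intro x hx
        rw [(hasDerivAt_gfun hp hp1 x).deriv]
        exact Gfun_nonneg_of_nonneg hp hp1 (le_of_lt (by simpa using hx))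
      have := hmono Set.self_mem_Ici (by simpa using hs) hs
      linarith [hg0 ▸ this]
    · have hmono : AntitoneOn g (Set.Iic (0 : ℝ)) := by
        apply antitoneOn_of_deriv_nonpos (convex_Iic 0) hdiff.continuous.continuousOn
          hdiff.differentiableOn
        intro x hx
        rw [(hasDerivAt_gfun hp hp1 x).deriv]
        exact Gfun_nonpos_of_nonpos hp hp1 (le_of_lt (by simpa using hx))
      have := hmono (by simpa using hs) Set.self_mem_Iic hs
      linarith [hg0 ▸ this]
  have hlog : Real.log (Ffun p s) ≤ s ^ 2 / 8 := by
    simp only [hg] at hgs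
    linarith
  have := (Real.log_le_iff_le_exp (Ffun_pos hp hp1 s)).mp hlog
  simpa [Ffun] using this

section MGF
variable {w1 w0 : ℝ}

private lemma two_point {p h L : ℝ} (hp : 0 ≤ p) (hp1 : p ≤ 1) (hh0 : 0 ≤ h) (hh1 : h ≤ 1) :
    p * Real.exp (L * ((1 - p) * h)) + (1 - p) * Real.exp (L * (-(p * h)))
      ≤ Real.exp (L ^ 2 / 8) := by
  have hmain := hoeffding_scalar hp hp1 (L * h)
  have e1 : L * ((1 - p) * h) = (1 - p) * (L * h) := by ring
  have e2 : L * (-(p * h)) = -(p * (L * h)) := by ring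
  rw [e1, e2]
  refine hmain.trans (Real.exp_le_exp.mpr ?_)
  have hh2 : h ^ 2 ≤ 1 := by nlinarith
  nlinarith [sq_nonneg L, mul_le_mul_of_nonneg_left hh2 (sq_nonneg L)]

private lemma mgf_bound (h1 : 0 < w1) (h0 : 0 < w0) :
    ∀ (n m1 m0 : ℕ), n ≤ m1 + m0 → ∀ L : ℝ,
      (∑ ℓ : Fin n → Bool, wWeight m1 m0 w1 w0 ℓ *
        Real.exp (L * (fsum ℓ - wMean m1 m0 w1 w0 n))) ≤ Real.exp (L ^ 2 * n / 8) := by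
  intro n
  induction n with
  | zero =>
    intro m1 m0 _ L
    rw [wMean_zero]
    have hone : ∀ ℓ : Fin 0 → Bool,
        wWeight m1 m0 w1 w0 ℓ * Real.exp (L * (fsum ℓ - 0)) = 1 := by
      intro ℓ
      rw [wWeight, fsum]
      simp
    rw [Finset.sum_congr rfl (fun ℓ _ => hone ℓ)]
    simp
  | succ n ih =>
    intro m1 m0 hm L
    have hrec := wMean_succ h1 h0 (n := n) (m1 := m1) (m0 := m0) hm
    set μ := wMean m1 m0 w1 w0 (n + 1) with hμ
    set μA := wMean (m1 - 1) m0 w1 w0 n with hμA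
    set μB := wMean m1 (m0 - 1) w1 w0 n with hμB
    set E : ℝ := Real.exp (L ^ 2 * n / 8) with hE
    have hEpos : 0 < E := Real.exp_pos _
    rw [sum_cons_cube (fun ℓ => wWeight m1 m0 w1 w0 ℓ * Real.exp (L * (fsum ℓ - μ)))]
    simp only [wWeight_cons, fsum_cons, if_true, Bool.false_eq_true, if_false, zero_add]
    have hfacA : (∑ ℓ : Fin n → Bool, pOne m1 m0 w1 w0 * wWeight (m1 - 1) m0 w1 w0 ℓ *
        Real.exp (L * (1 + fsum ℓ - μ)))
        = pOne m1 m0 w1 w0 * Real.exp (L * (1 + μA - μ)) *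
          (∑ ℓ : Fin n → Bool, wWeight (m1 - 1) m0 w1 w0 ℓ * Real.exp (L * (fsum ℓ - μA))) := by
      rw [Finset.mul_sum]
      apply Finset.sum_congr rfl
      intro ℓ _
      rw [show pOne m1 m0 w1 w0 * Real.exp (L * (1 + μA - μ)) *
          (wWeight (m1 - 1) m0 w1 w0 ℓ * Real.exp (L * (fsum ℓ - μA)))
          = pOne m1 m0 w1 w0 * wWeight (m1 - 1) m0 w1 w0 ℓ *
            (Real.exp (L * (1 + μA - μ)) * Real.exp (L * (fsum ℓ - μA))) from by ring]
      rw [← Real.exp_add]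
      congr 2
      ring
    have hfacB : (∑ ℓ : Fin n → Bool, pZero m1 m0 w1 w0 * wWeight m1 (m0 - 1) w1 w0 ℓ *
        Real.exp (L * (fsum ℓ - μ)))
        = pZero m1 m0 w1 w0 * Real.exp (L * (μB - μ)) *
          (∑ ℓ : Fin n → Bool, wWeight m1 (m0 - 1) w1 w0 ℓ * Real.exp (L * (fsum ℓ - μB))) := by
      rw [Finset.mul_sum]
      apply Finset.sum_congr rfl
      intro ℓ _
      rw [show pZero m1 m0 w1 w0 * Real.exp (L * (μB - μ)) *
          (wWeight m1 (m0 - 1) w1 w0 ℓ * Real.exp (L * (fsum ℓ - μB)))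
          = pZero m1 m0 w1 w0 * wWeight m1 (m0 - 1) w1 w0 ℓ *
            (Real.exp (L * (μB - μ)) * Real.exp (L * (fsum ℓ - μB))) from by ring]
      rw [← Real.exp_add]
      congr 2
      ring
    rw [hfacA, hfacB]
    have hboundA : pOne m1 m0 w1 w0 * Real.exp (L * (1 + μA - μ)) *
        (∑ ℓ : Fin n → Bool, wWeight (m1 - 1) m0 w1 w0 ℓ * Real.exp (L * (fsum ℓ - μA)))
        ≤ pOne m1 m0 w1 w0 * Real.exp (L * (1 + μA - μ)) * E := by
      rcases Nat.eq_zero_or_pos m1 with hm1 | hm1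
      · have hz : pOne m1 m0 w1 w0 = 0 := by subst hm1; unfold pOne; simp
        rw [hz]
        simp
      · apply mul_le_mul_of_nonneg_left (ih (m1 - 1) m0 (by omega) L)
        exact mul_nonneg (pOne_nonneg _ _ h1.le h0.le) (Real.exp_pos _).le
    have hboundB : pZero m1 m0 w1 w0 * Real.exp (L * (μB - μ)) *
        (∑ ℓ : Fin n → Bool, wWeight m1 (m0 - 1) w1 w0 ℓ * Real.exp (L * (fsum ℓ - μB)))
        ≤ pZero m1 m0 w1 w0 * Real.exp (L * (μB - μ)) * E := by
      rcases Nat.eq_zero_or_pos m0 with hm0 | hm0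
      · have hz : pZero m1 m0 w1 w0 = 0 := by subst hm0; unfold pZero; simp
        rw [hz]
        simp
      · apply mul_le_mul_of_nonneg_left (ih m1 (m0 - 1) (by omega) L)
        exact mul_nonneg (pZero_nonneg _ _ h1.le h0.le) (Real.exp_pos _).le
    have hkey : pOne m1 m0 w1 w0 * Real.exp (L * (1 + μA - μ)) +
        pZero m1 m0 w1 w0 * Real.exp (L * (μB - μ)) ≤ Real.exp (L ^ 2 / 8) := by
      rcases Nat.eq_zero_or_pos m1 with hm1 | hm1
      · have hz : pOne m1 m0 w1 w0 = 0 := by subst hm1; unfold pOne; simp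
        have ho : pZero m1 m0 w1 w0 = 1 := by
          subst hm1
          unfold pZero
          have hpos : (0:ℝ) < (m0:ℝ) * w0 := by
            have : (0:ℝ) < (m0:ℝ) := by exact_mod_cast (by omega : 0 < m0)
            positivity
          rw [Nat.cast_zero, zero_mul, zero_add, div_self hpos.ne']
        have hμeq : μ = μB := by rw [hrec, hz, ho]; ring
        rw [hz, ho, hμeq, sub_self, mul_zero, Real.exp_zero]
        have : (0:ℝ) ≤ L ^ 2 / 8 := by positivity
        simpa using Real.one_le_exp this
      rcases Nat.eq_zero_or_pos m0 with hm0 | hm0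
      · have hz : pZero m1 m0 w1 w0 = 0 := by subst hm0; unfold pZero; simp
        have ho : pOne m1 m0 w1 w0 = 1 := by
          subst hm0
          unfold pOne
          have hpos : (0:ℝ) < (m1:ℝ) * w1 := by
            have : (0:ℝ) < (m1:ℝ) := by exact_mod_cast hm1
            positivity
          rw [Nat.cast_zero, zero_mul, add_zero, div_self hpos.ne']
        have hμeq : μ = 1 + μA := by rw [hrec, hz, ho]; ring
        rw [hz, ho, hμeq]
        rw [show (1 : ℝ) + μA - (1 + μA) = 0 from by ring, mul_zero, Real.exp_zero]
        have : (0:ℝ) ≤ L ^ 2 / 8 := by positivity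
        simpa using Real.one_le_exp this
      · -- main case
        set p := pOne m1 m0 w1 w0 with hp
        have hp0 : 0 ≤ p := pOne_nonneg _ _ h1.le h0.le
        have hp1 : p ≤ 1 := pOne_le_one h1 h0
        have hpz : pZero m1 m0 w1 w0 = 1 - p := by
          have := pOne_add_pZero h1 h0 (m1 := m1) (m0 := m0) (by omega)
          linarith
        set h : ℝ := 1 + μA - μB with hh
        have hmono := wMean_mono h1 h0 n (m1 - 1) (m0 - 1) (by omega)
        have he1 : (m1 - 1 + 1 : ℕ) = m1 := by omega
        have he2 : (m0 - 1 + 1 : ℕ) = m0 := by omega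
        rw [he1, he2] at hmono
        obtain ⟨hm1', hm2'⟩ := hmono
        have hh0 : 0 ≤ h := by rw [hh, hμA, hμB]; linarith
        have hh1 : h ≤ 1 := by rw [hh, hμA, hμB]; linarith
        have hμrec : μ = p * (1 + μA) + (1 - p) * μB := by rw [hrec, hpz]
        have e1 : 1 + μA - μ = (1 - p) * h := by rw [hμrec, hh]; ring
        have e2 : μB - μ = -(p * h) := by rw [hμrec, hh]; ring
        rw [hpz, e1, e2]
        exact two_point hp0 hp1 hh0 hh1
    refine le_trans (add_le_add hboundA hboundB) ?_
    calc pOne m1 m0 w1 w0 * Real.exp (L * (1 + μA - μ)) * E +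
        pZero m1 m0 w1 w0 * Real.exp (L * (μB - μ)) * E
        ≤ Real.exp (L ^ 2 / 8) * E := by
          rw [show pOne m1 m0 w1 w0 * Real.exp (L * (1 + μA - μ)) * E +
              pZero m1 m0 w1 w0 * Real.exp (L * (μB - μ)) * E
              = (pOne m1 m0 w1 w0 * Real.exp (L * (1 + μA - μ)) +
                pZero m1 m0 w1 w0 * Real.exp (L * (μB - μ))) * E from by ring]
          exact mul_le_mul_of_nonneg_right hkey hEpos.le
      _ = Real.exp (L ^ 2 * (n + 1 : ℕ) / 8) := by
          rw [hE, ← Real.exp_add]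
          congr 1
          push_cast
          ring
end MGF


private lemma chernoff_side {w1 w0 : ℝ} (h1 : 0 < w1) (h0 : 0 < w0)
    (n m1 m0 : ℕ) (hm : n ≤ m1 + m0) (L c : ℝ)
    (S : Finset (Fin n → Bool))
    (hS : ∀ ℓ ∈ S, (1:ℝ) ≤ Real.exp (L * (fsum ℓ - wMean m1 m0 w1 w0 n) + c)) :
    (∑ ℓ ∈ S, wWeight m1 m0 w1 w0 ℓ) ≤ Real.exp c * Real.exp (L ^ 2 * n / 8) := by
  have step1 : (∑ ℓ ∈ S, wWeight m1 m0 w1 w0 ℓ) ≤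
      ∑ ℓ ∈ S, wWeight m1 m0 w1 w0 ℓ *
        Real.exp (L * (fsum ℓ - wMean m1 m0 w1 w0 n) + c) := by
    apply Finset.sum_le_sum
    intro ℓ hℓ
    have hw := wWeight_nonneg m1 m0 h1.le h0.le ℓ
    nlinarith [hS ℓ hℓ]
  have step2 : (∑ ℓ ∈ S, wWeight m1 m0 w1 w0 ℓ *
      Real.exp (L * (fsum ℓ - wMean m1 m0 w1 w0 n) + c)) ≤
      ∑ ℓ : Fin n → Bool, wWeight m1 m0 w1 w0 ℓ *
        Real.exp (L * (fsum ℓ - wMean m1 m0 w1 w0 n) + c) := by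
    apply Finset.sum_le_sum_of_subset_of_nonneg (Finset.subset_univ S)
    intro ℓ _ _
    exact mul_nonneg (wWeight_nonneg m1 m0 h1.le h0.le ℓ) (Real.exp_pos _).le
  have step3 : (∑ ℓ : Fin n → Bool, wWeight m1 m0 w1 w0 ℓ *
      Real.exp (L * (fsum ℓ - wMean m1 m0 w1 w0 n) + c))
      = Real.exp c * ∑ ℓ : Fin n → Bool, wWeight m1 m0 w1 w0 ℓ *
          Real.exp (L * (fsum ℓ - wMean m1 m0 w1 w0 n)) := by
    rw [Finset.mul_sum]
    apply Finset.sum_congr rfl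
    intro ℓ _
    rw [Real.exp_add]
    ring
  have step4 := mgf_bound h1 h0 n m1 m0 hm L
  calc (∑ ℓ ∈ S, wWeight m1 m0 w1 w0 ℓ) ≤ _ := step1
    _ ≤ _ := step2
    _ = _ := step3
    _ ≤ Real.exp c * Real.exp (L ^ 2 * n / 8) :=
        mul_le_mul_of_nonneg_left step4 (Real.exp_pos c).le


/-- Two-sided concentration for the number of ones under the Wallenius noncentral
hypergeometric scheme: `Pr(f > E[f] + t) ≤ exp(-2t²/n)` and
`Pr(f < E[f] - t) ≤ exp(-2t²/n)`. -/
theorem stmt14 (m1 m0 : ℕ) (w1 w0 : ℝ) (n : ℕ) (hn : 1 ≤ n) (hnm : n ≤ m1 + m0)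
    (hw0 : 1 ≤ w0) (hw : w0 ≤ w1) (t : ℝ) (ht : 0 ≤ t) :
    (∑ ℓ ∈ Finset.univ.filter
        (fun ℓ : Fin n → Bool =>
          (∑ η : Fin n → Bool, wWeight m1 m0 w1 w0 η * fsum η) + t < fsum ℓ),
      wWeight m1 m0 w1 w0 ℓ) ≤ Real.exp (-2 * t ^ 2 / n) ∧
    (∑ ℓ ∈ Finset.univ.filter
        (fun ℓ : Fin n → Bool =>
          fsum ℓ < (∑ η : Fin n → Bool, wWeight m1 m0 w1 w0 η * fsum η) - t),
      wWeight m1 m0 w1 w0 ℓ) ≤ Real.exp (-2 * t ^ 2 / n) := by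
  have h0 : (0:ℝ) < w0 := lt_of_lt_of_le one_pos hw0
  have h1 : (0:ℝ) < w1 := lt_of_lt_of_le h0 hw
  have hμ : (∑ η : Fin n → Bool, wWeight m1 m0 w1 w0 η * fsum η) = wMean m1 m0 w1 w0 n := rfl
  have hn0 : (0:ℝ) < (n:ℝ) := by exact_mod_cast hn
  constructor
  · -- upper tail
    set L : ℝ := 4 * t / n with hL
    have hL0 : 0 ≤ L := by positivity
    have hbd := chernoff_side h1 h0 n m1 m0 hnm L (-(L * t))
      (Finset.univ.filter (fun ℓ : Fin n → Bool =>
        (∑ η : Fin n → Bool, wWeight m1 m0 w1 w0 η * fsum η) + t < fsum ℓ))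
      (by
        intro ℓ hℓ
        rw [Finset.mem_filter] at hℓ
        rw [hμ] at hℓ
        apply Real.one_le_exp
        have hgt : t < fsum ℓ - wMean m1 m0 w1 w0 n := by linarith [hℓ.2]
        nlinarith [hℓ.2, mul_le_mul_of_nonneg_left hgt.le hL0])
    refine hbd.trans (le_of_eq ?_)
    rw [← Real.exp_add]
    congr 1
    rw [hL]
    field_simp
    ring
  · -- lower tail
    set L : ℝ := -(4 * t / n) with hL
    have hL0 : L ≤ 0 := by
      rw [hL]
      have : 0 ≤ 4 * t / n := by positivity
      linarith
    have hbd := chernoff_side h1 h0 n m1 m0 hnm L (L * t)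
      (Finset.univ.filter (fun ℓ : Fin n → Bool =>
        fsum ℓ < (∑ η : Fin n → Bool, wWeight m1 m0 w1 w0 η * fsum η) - t))
      (by
        intro ℓ hℓ
        rw [Finset.mem_filter] at hℓ
        rw [hμ] at hℓ
        apply Real.one_le_exp
        have hlt : fsum ℓ - wMean m1 m0 w1 w0 n + t < 0 := by linarith [hℓ.2]
        have := mul_nonneg (neg_nonneg.mpr hL0) (neg_nonneg.mpr hlt.le)
        nlinarith)
    refine hbd.trans (le_of_eq ?_)
    rw [← Real.exp_add]
    congr 1
    rw [hL]
    field_simp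
    ring
end
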